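/- arXiv:1707.01002 — 6 statements merged into one kernel-verified Lean document; each statement's English description precedes it below -/
import Mathlib

section
/- For a signed permutation σ in the hyperoctahedral group B_n, the odd length L_B(σ) := (1/2)|{(i,j) ∈ [-n,n]² : i < j, σ(i) > σ(j), i ≢ j (mod 2)}| equals oinv(σ) + oneg(σ) + onsp(σ), where oinv(σ) = |{(i,j) ∈ [n]² : i<j, σ(i)>σ(j), i ≢ j (mod 2)}|, oneg(σ) = |{i ∈ [n] : σ(i)<0, i odd}|, and onsp(σ) = |{(i,j) ∈ [n]² : σ(i)+σ(j)<0, i ≢ j (mod 2)}|. -/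
open Finset Polynomial
open scoped Classical

/-- `σ` is (the natural extension of) an element of the hyperoctahedral group `B_n`:
a permutation of `ℤ` satisfying `σ(-j) = -σ(j)` and fixing all `j` with `|j| > n`. -/
def IsB (n : ℕ) (σ : Equiv.Perm ℤ) : Prop :=
  (∀ j : ℤ, σ (-j) = - σ j) ∧ (∀ j : ℤ, (n : ℤ) < |j| → σ j = j)

/-- The Coxeter length of `σ ∈ B_n`:
`ℓ(σ) = (1/2)|{(i,j) ∈ [-n,n]² : i < j, σ(i) > σ(j)}|`. -/
noncomputable def ellB (n : ℕ) (σ : Equiv.Perm ℤ) : ℕ :=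
  (((Finset.Icc (-(n : ℤ)) (n : ℤ)) ×ˢ (Finset.Icc (-(n : ℤ)) (n : ℤ))).filter
    (fun p => p.1 < p.2 ∧ σ p.2 < σ p.1)).card / 2

/-- The odd length on `B_n`:
`L(σ) = (1/2)|{(i,j) ∈ [-n,n]² : i < j, σ(i) > σ(j), i ≢ j (mod 2)}|`. -/
noncomputable def oddLB (n : ℕ) (σ : Equiv.Perm ℤ) : ℕ :=
  (((Finset.Icc (-(n : ℤ)) (n : ℤ)) ×ˢ (Finset.Icc (-(n : ℤ)) (n : ℤ))).filter
    (fun p => p.1 < p.2 ∧ σ p.2 < σ p.1 ∧ p.1 % 2 ≠ p.2 % 2)).card / 2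

/-- Membership in the right quotient `B_n^J`, `J ⊆ [0,n-1]`: no descent at any `j ∈ J`,
i.e. `σ(j) < σ(j+1)` for all `j ∈ J`. -/
def inQuotB (J : Finset ℕ) (σ : Equiv.Perm ℤ) : Prop :=
  ∀ j ∈ J, σ (j : ℤ) < σ ((j : ℤ) + 1)

/-- Signed generating function `∑ (-1)^{ℓ(σ)} x^{L(σ)}` over the elements of `B_n`
satisfying `P` (a finite sum, via `finsum`). -/
noncomputable def gfB (n : ℕ) (P : Equiv.Perm ℤ → Prop) : Polynomial ℤ :=
  ∑ᶠ (σ : Equiv.Perm ℤ) (_ : IsB n σ ∧ P σ),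
    (-1 : Polynomial ℤ) ^ (ellB n σ) * X ^ (oddLB n σ)

/-- `oinv(σ) = |{(i,j) ∈ [n]² : i < j, σ(i) > σ(j), i ≢ j (mod 2)}|`. -/
noncomputable def oinv (n : ℕ) (σ : Equiv.Perm ℤ) : ℕ :=
  (((Finset.Icc (1 : ℤ) (n : ℤ)) ×ˢ (Finset.Icc (1 : ℤ) (n : ℤ))).filter
    (fun p => p.1 < p.2 ∧ σ p.2 < σ p.1 ∧ p.1 % 2 ≠ p.2 % 2)).card

/-- `oneg(σ) = |{i ∈ [n] : σ(i) < 0, i odd}|`. -/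
noncomputable def oneg (n : ℕ) (σ : Equiv.Perm ℤ) : ℕ :=
  ((Finset.Icc (1 : ℤ) (n : ℤ)).filter (fun i => σ i < 0 ∧ i % 2 = 1)).card

/-- `onsp(σ) = |{(i,j) ∈ [n]² : i < j, σ(i) + σ(j) < 0, i ≢ j (mod 2)}|`
(pairs counted unordered). -/
noncomputable def onsp (n : ℕ) (σ : Equiv.Perm ℤ) : ℕ :=
  (((Finset.Icc (1 : ℤ) (n : ℤ)) ×ˢ (Finset.Icc (1 : ℤ) (n : ℤ))).filter
    (fun p => p.1 < p.2 ∧ σ p.1 + σ p.2 < 0 ∧ p.1 % 2 ≠ p.2 % 2)).card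

/-!
The odd inversions of `σ` in `[-n,n]²` are exchanged in pairs by the involution
`(i, j) ↦ (-j, -i)`, which reverses the sign of `i + j`; `i + j = 0` never happens because
`i ≢ j (mod 2)`. So `L_B(σ)` counts the odd inversions with `i + j > 0`. Those with `i > 0`
are counted by `oinv`, those with `i = 0` by `oneg`, and those with `i < 0` become, via
`(i, j) ↦ (-i, j)`, exactly the pairs counted by `onsp`.
-/

namespace HyperoctahedralOddLength

theorem card_eq_card_filter_pos_add_card_filter_eq_zero_add_card_filter_neg {α : Type*}
    (s : Finset α) (f : α → ℤ) :
    s.card = (s.filter (0 < f ·)).card + (s.filter (f · = 0)).card +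
      (s.filter (f · < 0)).card := by
  rw [card_filter, card_filter, card_filter, ← sum_add_distrib, ← sum_add_distrib,
    card_eq_sum_ones]
  refine sum_congr rfl fun x _ => ?_
  split_ifs <;> omega

noncomputable def oddInvPairs (n : ℕ) (σ : Equiv.Perm ℤ) : Finset (ℤ × ℤ) :=
  ((Icc (-(n : ℤ)) n) ×ˢ (Icc (-(n : ℤ)) n)).filter
    (fun p => p.1 < p.2 ∧ σ p.2 < σ p.1 ∧ p.1 % 2 ≠ p.2 % 2)

variable {n : ℕ} {σ : Equiv.Perm ℤ}

theorem oddLB_eq_card_oddInvPairs_div_two : oddLB n σ = (oddInvPairs n σ).card / 2 := rfl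

theorem mem_oddInvPairs {p : ℤ × ℤ} :
    p ∈ oddInvPairs n σ ↔ ((-(n : ℤ) ≤ p.1 ∧ p.1 ≤ n) ∧ -(n : ℤ) ≤ p.2 ∧ p.2 ≤ n) ∧
      p.1 < p.2 ∧ σ p.2 < σ p.1 ∧ p.1 % 2 ≠ p.2 % 2 := by
  simp [oddInvPairs]

theorem card_filter_fst_pos : (((oddInvPairs n σ).filter (fun p => 0 < p.1 + p.2)).filter
    (0 < ·.1)).card = oinv n σ := by
  unfold oinv
  congr 1
  ext ⟨i, j⟩
  simp only [mem_filter, mem_oddInvPairs, mem_product, mem_Icc]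
  omega

section Odd

variable (hσ : ∀ j, σ (-j) = -σ j)
include hσ

theorem card_oddInvPairs_eq_two_mul :
    (oddInvPairs n σ).card = 2 * ((oddInvPairs n σ).filter (fun p => 0 < p.1 + p.2)).card := by
  rw [← card_filter_add_card_filter_not (p := fun p : ℤ × ℤ => 0 < p.1 + p.2), two_mul]
  congr 1
  symm
  apply card_nbij' (fun p => (-p.2, -p.1)) (fun p => (-p.2, -p.1))
  all_goals
    rintro ⟨i, j⟩ hp
    simp only [mem_coe, mem_filter, mem_oddInvPairs] at hp ⊢
  · have := hσ i; have := hσ j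
    omega
  · have := hσ i; have := hσ j
    omega
  all_goals simp

theorem card_filter_fst_eq_zero : (((oddInvPairs n σ).filter (fun p => 0 < p.1 + p.2)).filter
    (·.1 = 0)).card = oneg n σ := by
  have hσ0 : σ 0 = 0 := by have := hσ 0; rw [neg_zero] at this; omega
  apply card_nbij' (·.2) (fun j => (0, j))
  · rintro ⟨i, j⟩ hp
    simp only [mem_coe, mem_filter, mem_oddInvPairs, mem_Icc] at hp ⊢
    obtain rfl : i = 0 := hp.2
    omega
  · intro j hj
    simp only [mem_coe, mem_filter, mem_oddInvPairs, mem_Icc, hσ0, and_true] at hj ⊢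
    omega
  · rintro ⟨i, j⟩ hp
    simp only [mem_coe, mem_filter] at hp
    simp [hp.2]
  · intro j _
    rfl

theorem card_filter_fst_neg : (((oddInvPairs n σ).filter (fun p => 0 < p.1 + p.2)).filter
    (·.1 < 0)).card = onsp n σ := by
  apply card_nbij' (fun p => (-p.1, p.2)) (fun p => (-p.1, p.2))
  all_goals
    rintro ⟨i, j⟩ hp
    simp only [mem_coe, mem_filter, mem_oddInvPairs, mem_product, mem_Icc] at hp ⊢
  · have := hσ i; omega
  · have := hσ i; omega
  all_goals simp

end Odd

end HyperoctahedralOddLength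

open HyperoctahedralOddLength in
/-- Proposition 5.1. For `σ ∈ B_n`,
`L_B(σ) = oinv(σ) + oneg(σ) + onsp(σ)`. -/
theorem statement1 (n : ℕ) (σ : Equiv.Perm ℤ) (h : IsB n σ) :
    oddLB n σ = oinv n σ + oneg n σ + onsp n σ := by
  have hσ := h.1
  rw [oddLB_eq_card_oddInvPairs_div_two, card_oddInvPairs_eq_two_mul hσ,
    card_eq_card_filter_pos_add_card_filter_eq_zero_add_card_filter_neg _ (·.1),
    card_filter_fst_pos, card_filter_fst_eq_zero hσ, card_filter_fst_neg hσ]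
  omega
end

section
/- Let n ∈ ℙ and I ⊆ [n-1]. If n is odd, or n is even and every element of [n-1] \ I is even, then the signed generating function Σ_{σ ∈ S_n^I} (-1)^{ℓ(σ)} x^{L(σ)} equals Σ_{σ ∈ C_{n,+}^I} (-1)^{ℓ(σ)} x^{L(σ)}, where the second sum is restricted to even chessboard elements of the quotient. -/
open Finset Polynomial
open scoped Classical

/-- Number of inversions (Coxeter length) of a permutation of `Fin n`. -/
def ellA (n : ℕ) (σ : Equiv.Perm (Fin n)) : ℕ :=
  (Finset.univ.filter (fun p : Fin n × Fin n => p.1 < p.2 ∧ σ p.2 < σ p.1)).card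

/-- The odd length: inversions `(i,j)` with `i ≢ j (mod 2)`. -/
def oddLA (n : ℕ) (σ : Equiv.Perm (Fin n)) : ℕ :=
  (Finset.univ.filter (fun p : Fin n × Fin n =>
    p.1 < p.2 ∧ σ p.2 < σ p.1 ∧ (p.1 : ℕ) % 2 ≠ (p.2 : ℕ) % 2)).card

/-- Membership in the right quotient `S_n^I` (generators indexed 1-based by `I ⊆ [n-1]`):
no descent at any position of `I`. Position `k ∈ I` (1-based) compares the values at the
0-based positions `k-1` and `k`. -/
def inQuotA (n : ℕ) (I : Finset ℕ) (σ : Equiv.Perm (Fin n)) : Prop :=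
  ∀ i j : Fin n, (j : ℕ) = (i : ℕ) + 1 → (i : ℕ) + 1 ∈ I → σ i < σ j

/-- Even chessboard elements: `i + σ(i)` is even for all `i` (0- or 1-based is equivalent). -/
def chessPlus (n : ℕ) (σ : Equiv.Perm (Fin n)) : Prop :=
  ∀ i : Fin n, ((i : ℕ) + (σ i : ℕ)) % 2 = 0

/-- Odd chessboard elements: `i + σ(i)` is odd for all `i`. -/
def chessMinus (n : ℕ) (σ : Equiv.Perm (Fin n)) : Prop :=
  ∀ i : Fin n, ((i : ℕ) + (σ i : ℕ)) % 2 = 1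

/-- Signed generating function `∑ (-1)^{ℓ(σ)} x^{L(σ)}` over the permutations satisfying `P`. -/
noncomputable def gfA (n : ℕ) (P : Equiv.Perm (Fin n) → Prop) : Polynomial ℤ :=
  ∑ σ : Equiv.Perm (Fin n),
    if P σ then (-1 : Polynomial ℤ) ^ (ellA n σ) * X ^ (oddLA n σ) else 0


/-- position (0-based) of the value `c` in `σ`, or 0 if `c ≥ n`. -/
def posA (n : ℕ) (σ : Equiv.Perm (Fin n)) (c : ℕ) : ℕ :=
  if h : c < n then ((σ.symm ⟨c, h⟩ : Fin n) : ℕ) else 0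

def goodA (n : ℕ) (σ : Equiv.Perm (Fin n)) (a : ℕ) : Prop :=
  a + 1 < n ∧ posA n σ a % 2 = posA n σ (a + 1) % 2

lemma swap_lt_iff {n : ℕ} {v w : Fin n} (hw : (w:ℕ) = (v:ℕ) + 1) {x y : Fin n}
    (h1 : ¬(x = v ∧ y = w)) (h2 : ¬(x = w ∧ y = v)) :
    Equiv.swap v w y < Equiv.swap v w x ↔ y < x := by
  by_cases hx : x = v
  · have hy : y ≠ w := fun h => h1 ⟨hx, h⟩
    by_cases hy' : y = v
    · rw [hx, hy']; simp [Fin.lt_def]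
    · rw [hx, Equiv.swap_apply_left, Equiv.swap_apply_of_ne_of_ne hy' hy, Fin.lt_def, Fin.lt_def]
      have : (y:ℕ) ≠ (v:ℕ) := fun h => hy' (Fin.ext h)
      omega
  · by_cases hx' : x = w
    · have hy : y ≠ v := fun h => h2 ⟨hx', h⟩
      by_cases hy' : y = w
      · rw [hx', hy']; simp [Fin.lt_def]
      · rw [hx', Equiv.swap_apply_right, Equiv.swap_apply_of_ne_of_ne hy hy', Fin.lt_def,
          Fin.lt_def]
        have : (y:ℕ) ≠ (w:ℕ) := fun h => hy' (Fin.ext h)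
        omega
    · rw [Equiv.swap_apply_of_ne_of_ne hx hx']
      have hxv : (x:ℕ) ≠ v := fun h => hx (Fin.ext h)
      have hxw : (x:ℕ) ≠ w := fun h => hx' (Fin.ext h)
      by_cases hy : y = v
      · rw [hy, Equiv.swap_apply_left, Fin.lt_def, Fin.lt_def]; omega
      · by_cases hy' : y = w
        · rw [hy', Equiv.swap_apply_right, Fin.lt_def, Fin.lt_def]; omega
        · rw [Equiv.swap_apply_of_ne_of_ne hy hy']


section Core
variable {n : ℕ} (σ : Equiv.Perm (Fin n)) (v w : Fin n)

/-- exceptional-pair characterization -/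
lemma swap_lt_iff' (hw : (w:ℕ) = (v:ℕ) + 1) {x y : Fin n}
    (h1 : ¬(x = σ.symm v ∧ y = σ.symm w)) (h2 : ¬(x = σ.symm w ∧ y = σ.symm v)) :
    (Equiv.swap v w * σ) y < (Equiv.swap v w * σ) x ↔ σ y < σ x := by
  have e1 : ¬(σ x = v ∧ σ y = w) := by
    rintro ⟨a, b⟩; exact h1 ⟨by rw [← a]; simp, by rw [← b]; simp⟩
  have e2 : ¬(σ x = w ∧ σ y = v) := by
    rintro ⟨a, b⟩; exact h2 ⟨by rw [← a]; simp, by rw [← b]; simp⟩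
  exact swap_lt_iff hw e1 e2


variable (hw : (w:ℕ) = (v:ℕ) + 1)
    (hpq : ((σ.symm v : Fin n) : ℕ) % 2 = ((σ.symm w : Fin n) : ℕ) % 2)

include hw hpq

lemma swap_oddLA : oddLA n (Equiv.swap v w * σ) = oddLA n σ := by
  unfold oddLA
  congr 1
  apply Finset.filter_congr
  intro pr _
  constructor
  · rintro ⟨a, b, c⟩
    refine ⟨a, ?_, c⟩
    rw [← swap_lt_iff' σ v w hw ?_ ?_] <;> try exact b
    · rintro ⟨h1, h2⟩; rw [h1, h2] at c; exact c hpq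
    · rintro ⟨h1, h2⟩; rw [h1, h2] at c; exact c hpq.symm
  · rintro ⟨a, b, c⟩
    refine ⟨a, ?_, c⟩
    rw [swap_lt_iff' σ v w hw ?_ ?_] <;> try exact b
    · rintro ⟨h1, h2⟩; rw [h1, h2] at c; exact c hpq
    · rintro ⟨h1, h2⟩; rw [h1, h2] at c; exact c hpq.symm

lemma swap_quot (I : Finset ℕ) (hq : inQuotA n I σ) : inQuotA n I (Equiv.swap v w * σ) := by
  intro i j hj hi
  rw [swap_lt_iff' σ v w hw ?_ ?_]
  · exact hq i j hj hi
  · rintro ⟨h1, h2⟩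
    rw [h1, h2] at hj
    omega
  · rintro ⟨h1, h2⟩
    rw [h1, h2] at hj
    omega

lemma swap_nchess (hnc : ¬ chessPlus n σ) : ¬ chessPlus n (Equiv.swap v w * σ) := by
  intro hch
  apply hnc
  intro i
  by_cases hi : i = σ.symm v
  · have := hch (σ.symm w)
    rw [Equiv.Perm.mul_apply, Equiv.apply_symm_apply, Equiv.swap_apply_right] at this
    rw [hi, Equiv.apply_symm_apply]
    omega
  · by_cases hi' : i = σ.symm w
    · have := hch (σ.symm v)
      rw [Equiv.Perm.mul_apply, Equiv.apply_symm_apply, Equiv.swap_apply_left] at this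
      rw [hi', Equiv.apply_symm_apply]
      omega
    · have := hch i
      have h1 : σ i ≠ v := fun h => hi (by rw [← h]; simp)
      have h2 : σ i ≠ w := fun h => hi' (by rw [← h]; simp)
      rwa [Equiv.Perm.mul_apply, Equiv.swap_apply_of_ne_of_ne h1 h2] at this

omit hw in
lemma swap_posA (c : ℕ) : posA n (Equiv.swap v w * σ) c % 2 = posA n σ c % 2 := by
  unfold posA
  by_cases h : c < n
  · rw [dif_pos h, dif_pos h]
    have : (Equiv.swap v w * σ).symm ⟨c, h⟩ = σ.symm (Equiv.swap v w ⟨c, h⟩) := by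
      simp [Equiv.Perm.mul_def]
    rw [this]
    by_cases hc : (⟨c, h⟩ : Fin n) = v
    · rw [hc, Equiv.swap_apply_left]; exact hpq.symm
    · by_cases hc' : (⟨c, h⟩ : Fin n) = w
      · rw [hc', Equiv.swap_apply_right]; exact hpq
      · rw [Equiv.swap_apply_of_ne_of_ne hc hc']
  · rw [dif_neg h, dif_neg h]


omit hpq in
lemma swap_ell_parity : (ellA n (Equiv.swap v w * σ) + ellA n σ) % 2 = 1 := by
  set τ := Equiv.swap v w * σ with hτdef
  set p := σ.symm v with hp
  set q := σ.symm w with hq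
  have hvw : v ≠ w := fun h => by rw [h] at hw; omega
  have hpqne : (p:ℕ) ≠ (q:ℕ) := fun h => hvw (by
    have : p = q := Fin.ext h
    have := congrArg σ this
    rwa [hp, hq, Equiv.apply_symm_apply, Equiv.apply_symm_apply] at this)
  set r : Fin n × Fin n := if (p:ℕ) < (q:ℕ) then (p, q) else (q, p) with hr
  have hr12 : r.1 < r.2 := by
    rw [hr]; split_ifs with h
    · show p < q; exact Fin.lt_def.mpr (by omega)
    · show q < p; exact Fin.lt_def.mpr (by omega)
  have hrPQ : (r.1 = p ∧ r.2 = q) ∨ (r.1 = q ∧ r.2 = p) := by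
    rw [hr]; split
    · left; exact ⟨rfl, rfl⟩
    · right; exact ⟨rfl, rfl⟩
  have hcongr : ∀ pr : Fin n × Fin n, pr ≠ r →
      ((pr.1 < pr.2 ∧ τ pr.2 < τ pr.1) ↔ (pr.1 < pr.2 ∧ σ pr.2 < σ pr.1)) := by
    intro pr hne
    have hne1 : ¬(pr.1 = p ∧ pr.2 = q) ∨ ¬((pr.1:ℕ) < pr.2) ∨ True := by tauto
    constructor
    · rintro ⟨a, b⟩
      refine ⟨a, ?_⟩
      rw [← swap_lt_iff' σ v w hw ?_ ?_]
      · exact b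
      · rintro ⟨h1, h2⟩
        apply hne
        have hlt : (p:ℕ) < (q:ℕ) := by rw [hp, hq, ← h1, ← h2]; exact Fin.lt_def.mp a
        rw [hr, if_pos hlt]
        exact Prod.ext h1 h2
      · rintro ⟨h1, h2⟩
        apply hne
        have hlt : (q:ℕ) < (p:ℕ) := by rw [hq, hp, ← h1, ← h2]; exact Fin.lt_def.mp a
        rw [hr, if_neg (by omega)]
        exact Prod.ext h1 h2
    · rintro ⟨a, b⟩
      refine ⟨a, ?_⟩
      rw [swap_lt_iff' σ v w hw ?_ ?_]
      · exact b
      · rintro ⟨h1, h2⟩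
        apply hne
        have hlt : (p:ℕ) < (q:ℕ) := by rw [hp, hq, ← h1, ← h2]; exact Fin.lt_def.mp a
        rw [hr, if_pos hlt]
        exact Prod.ext h1 h2
      · rintro ⟨h1, h2⟩
        apply hne
        have hlt : (q:ℕ) < (p:ℕ) := by rw [hq, hp, ← h1, ← h2]; exact Fin.lt_def.mp a
        rw [hr, if_neg (by omega)]
        exact Prod.ext h1 h2
  have hτ1 : τ p = w := by rw [hτdef, hp, Equiv.Perm.mul_apply, Equiv.apply_symm_apply,
    Equiv.swap_apply_left]
  have hτ2 : τ q = v := by rw [hτdef, hq, Equiv.Perm.mul_apply, Equiv.apply_symm_apply,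
    Equiv.swap_apply_right]
  have hσ1 : σ p = v := by rw [hp, Equiv.apply_symm_apply]
  have hσ2 : σ q = w := by rw [hq, Equiv.apply_symm_apply]
  have hvltw : v < w := by rw [Fin.lt_def]; omega
  have hflip : (r.1 < r.2 ∧ τ r.2 < τ r.1) ↔ ¬(r.1 < r.2 ∧ σ r.2 < σ r.1) := by
    rcases hrPQ with ⟨h1, h2⟩ | ⟨h1, h2⟩
    · rw [h1, h2, hτ1, hτ2, hσ1, hσ2]
      simp only [hr12 , h1 ▸ h2 ▸ hr12, true_and]
      constructor
      · intro _ h; exact absurd hvltw (lt_asymm h)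
      · intro _; exact hvltw
    · rw [h1, h2, hτ1, hτ2, hσ1, hσ2]
      simp only [h1 ▸ h2 ▸ hr12, true_and]
      constructor
      · intro h; exact absurd h (lt_asymm hvltw)
      · intro h; exact absurd hvltw h
  have e1 : ellA n τ = (if (r.1 < r.2 ∧ τ r.2 < τ r.1) then 1 else 0) +
      ∑ pr ∈ Finset.univ.erase r, (if (pr.1 < pr.2 ∧ τ pr.2 < τ pr.1) then 1 else 0) := by
    rw [ellA, Finset.card_filter, ← Finset.add_sum_erase _ _ (mem_univ r)]
  have e2 : ellA n σ = (if (r.1 < r.2 ∧ σ r.2 < σ r.1) then 1 else 0) +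
      ∑ pr ∈ Finset.univ.erase r, (if (pr.1 < pr.2 ∧ σ pr.2 < σ pr.1) then 1 else 0) := by
    rw [ellA, Finset.card_filter, ← Finset.add_sum_erase _ _ (mem_univ r)]
  have e3 : ∑ pr ∈ Finset.univ.erase r, (if (pr.1 < pr.2 ∧ τ pr.2 < τ pr.1) then 1 else 0) =
      ∑ pr ∈ Finset.univ.erase r, (if (pr.1 < pr.2 ∧ σ pr.2 < σ pr.1) then 1 else 0) := by
    apply Finset.sum_congr rfl
    intro pr hpr
    exact if_congr (hcongr pr (Finset.ne_of_mem_erase hpr)) rfl rfl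
  rw [e1, e2, e3]
  by_cases hc : (r.1 < r.2 ∧ σ r.2 < σ r.1)
  · rw [if_pos hc, if_neg (by rw [hflip]; exact fun h => h hc)]
    omega
  · rw [if_neg hc, if_pos (hflip.mpr hc)]
    omega

omit hpq in
lemma swap_sign : (-1 : Polynomial ℤ) ^ ellA n (Equiv.swap v w * σ) =
    -((-1 : Polynomial ℤ) ^ ellA n σ) := by
  have h := swap_ell_parity σ v w hw
  rcases Nat.even_or_odd (ellA n σ) with he | he
  · have hτ : Odd (ellA n (Equiv.swap v w * σ)) := by
      rw [Nat.even_iff] at he; rw [Nat.odd_iff]; omega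
    rw [hτ.neg_one_pow, he.neg_one_pow]
  · have hτ : Even (ellA n (Equiv.swap v w * σ)) := by
      rw [Nat.odd_iff] at he; rw [Nat.even_iff]; omega
    rw [hτ.neg_one_pow, he.neg_one_pow, neg_neg]


end Core

lemma exists_good {n : ℕ} (hn : 1 ≤ n) (I : Finset ℕ)
    (hpar : n % 2 = 1 ∨ (n % 2 = 0 ∧ ∀ j ∈ Finset.Icc 1 (n - 1), j ∉ I → j % 2 = 0))
    (σ : Equiv.Perm (Fin n)) (hq : inQuotA n I σ) (hnc : ¬ chessPlus n σ) :
    ∃ a, goodA n σ a := by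
  by_contra hcon
  push_neg at hcon
  unfold goodA at hcon
  have hstep : ∀ k, k + 1 < n → posA n σ (k + 1) % 2 ≠ posA n σ k % 2 := by
    intro k h hEq
    exact (not_and.mp (hcon k)) h hEq.symm
  have hchain : ∀ k, k < n → posA n σ k % 2 = (posA n σ 0 + k) % 2 := by
    intro k
    induction k with
    | zero => intro _; simp
    | succ m ih =>
      intro h
      have h1 : m < n := by omega
      have h2 := hstep m h
      have h3 := ih h1
      omega
  have hkey : ∀ i : Fin n, ((i : ℕ) + (σ i : ℕ)) % 2 = posA n σ 0 % 2 := by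
    intro i
    have hlt : ((σ i : ℕ)) < n := (σ i).isLt
    have hc := hchain ((σ i : ℕ)) hlt
    have hpos : posA n σ ((σ i : ℕ)) = (i : ℕ) := by
      rw [posA, dif_pos hlt]
      have e : (⟨(σ i : ℕ), hlt⟩ : Fin n) = σ i := rfl
      rw [e, Equiv.symm_apply_apply]
    omega
  by_cases h0 : posA n σ 0 % 2 = 0
  · exact hnc (fun i => by rw [hkey i, h0])
  · have hm : chessMinus n σ := fun i => by have := hkey i; omega
    rcases hpar with hodd | ⟨_, hI2⟩
    · have hsum1 : ∑ i : Fin n, ((((i : ℕ) + (σ i : ℕ)) : ℕ) : ZMod 2) = (n : ZMod 2) := by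
        rw [Finset.sum_congr rfl (fun i _ => by
          rw [← ZMod.natCast_mod (((i : ℕ) + (σ i : ℕ))) 2, hm i, Nat.cast_one])]
        simp
      have hsum0 : ∑ i : Fin n, ((((i : ℕ) + (σ i : ℕ)) : ℕ) : ZMod 2) = 0 := by
        push_cast
        rw [Finset.sum_add_distrib]
        rw [Equiv.sum_comp σ (fun i : Fin n => ((i : ℕ) : ZMod 2))]
        exact CharTwo.add_self_eq_zero _
      rw [hsum0] at hsum1
      have : ((n : ℕ) : ZMod 2) = 1 := by
        rw [← ZMod.natCast_mod n 2, hodd, Nat.cast_one]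
      rw [← hsum1] at this
      exact one_ne_zero this.symm
    · have h0n : 0 < n := hn
      set pp := σ.symm ⟨0, h0n⟩ with hpp
      have hσpp : σ pp = ⟨0, h0n⟩ := Equiv.apply_symm_apply σ _
      have hoddp : (pp : ℕ) % 2 = 1 := by
        have := hm pp
        rw [hσpp] at this
        simpa using this
      have h1le : 1 ≤ (pp : ℕ) := by omega
      have hplt : (pp : ℕ) < n := pp.isLt
      have hlt : (pp : ℕ) - 1 < n := by omega
      have hmem : (pp : ℕ) ∈ I := by
        by_contra hni
        have hicc : (pp : ℕ) ∈ Finset.Icc 1 (n - 1) := Finset.mem_Icc.mpr ⟨h1le, by omega⟩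
        have := hI2 _ hicc hni
        omega
      have hq1 : (pp : ℕ) = ((⟨(pp : ℕ) - 1, hlt⟩ : Fin n) : ℕ) + 1 := by simp; omega
      have hq2 : ((⟨(pp : ℕ) - 1, hlt⟩ : Fin n) : ℕ) + 1 ∈ I := by
        have e : ((⟨(pp : ℕ) - 1, hlt⟩ : Fin n) : ℕ) + 1 = (pp : ℕ) := by simp; omega
        rw [e]; exact hmem
      have hqlt := hq ⟨(pp : ℕ) - 1, hlt⟩ pp hq1 hq2
      rw [hσpp] at hqlt
      exact absurd hqlt (by simp [Fin.lt_def])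

noncomputable def phiA (n : ℕ) (σ : Equiv.Perm (Fin n)) : Equiv.Perm (Fin n) :=
  if h : ∃ a, goodA n σ a then
    Equiv.swap ⟨Nat.find h, Nat.lt_of_succ_lt (Nat.find_spec h).1⟩
      ⟨Nat.find h + 1, (Nat.find_spec h).1⟩ * σ
  else σ

lemma phiA_props {n : ℕ} {σ : Equiv.Perm (Fin n)} (h : ∃ a, goodA n σ a) :
    phiA n (phiA n σ) = σ ∧ phiA n σ ≠ σ ∧
    oddLA n (phiA n σ) = oddLA n σ ∧
    ((-1 : Polynomial ℤ) ^ ellA n (phiA n σ) = -((-1 : Polynomial ℤ) ^ ellA n σ)) ∧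
    (∀ I, inQuotA n I σ → inQuotA n I (phiA n σ)) ∧
    (¬ chessPlus n σ → ¬ chessPlus n (phiA n σ)) ∧
    (∃ b, goodA n (phiA n σ) b) := by
  obtain ⟨h1, h2⟩ := Nat.find_spec h
  set a := Nat.find h with ha
  set v : Fin n := ⟨a, Nat.lt_of_succ_lt h1⟩ with hv
  set w : Fin n := ⟨a + 1, h1⟩ with hwdef
  have hw : (w : ℕ) = (v : ℕ) + 1 := rfl
  have hφ : phiA n σ = Equiv.swap v w * σ := by rw [phiA, dif_pos h]
  have hpq : ((σ.symm v : Fin n) : ℕ) % 2 = ((σ.symm w : Fin n) : ℕ) % 2 := by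
    have e1 : posA n σ a = ((σ.symm v : Fin n) : ℕ) := by
      rw [posA, dif_pos (Nat.lt_of_succ_lt h1)]
    have e2 : posA n σ (a + 1) = ((σ.symm w : Fin n) : ℕ) := by rw [posA, dif_pos h1]
    omega
  have hgood : ∀ b, goodA n (phiA n σ) b ↔ goodA n σ b := by
    intro b
    rw [hφ]
    unfold goodA
    rw [swap_posA σ v w hpq b, swap_posA σ v w hpq (b + 1)]
  have h' : ∃ b, goodA n (phiA n σ) b := ⟨a, (hgood a).mpr ⟨h1, h2⟩⟩
  have hfind : Nat.find h' = a :=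
    le_antisymm (Nat.find_le ((hgood a).mpr ⟨h1, h2⟩))
      (Nat.find_le ((hgood _).mp (Nat.find_spec h')))
  have cancel : ∀ (b c : Fin n), b = v → c = w →
      Equiv.swap b c * (Equiv.swap v w * σ) = σ := by
    rintro b c rfl rfl
    rw [← mul_assoc, Equiv.swap_mul_self, one_mul]
  refine ⟨?_, ?_, ?_, ?_, ?_, ?_, h'⟩
  · rw [phiA, dif_pos h']  -- unfold outer phiA at (phiA n σ)
    have hswap : Equiv.swap (⟨Nat.find h', Nat.lt_of_succ_lt (Nat.find_spec h').1⟩ : Fin n)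
        ⟨Nat.find h' + 1, (Nat.find_spec h').1⟩ = Equiv.swap v w := by
      congr 1
      · exact Fin.ext hfind
      · exact Fin.ext (show Nat.find h' + 1 = a + 1 by omega)
    rw [hswap, hφ, ← mul_assoc, Equiv.swap_mul_self, one_mul]
  · rw [hφ]
    intro heq
    have := congrArg (fun f : Equiv.Perm (Fin n) => f (σ.symm v)) heq
    simp only [Equiv.Perm.mul_apply, Equiv.apply_symm_apply, Equiv.swap_apply_left] at this
    have := congrArg Fin.val this
    rw [hw] at this
    omega
  · rw [hφ]; exact swap_oddLA σ v w hw hpq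
  · rw [hφ]; exact swap_sign σ v w hw
  · intro I hq; rw [hφ]; exact swap_quot σ v w hw hpq I hq
  · intro hnc; rw [hφ]; exact swap_nchess σ v w hw hpq hnc



/-- Lemma 3.1. If `n` is odd, or `n` is even and every element of
`[n-1] \ I` is even, then the signed generating function over `S_n^I` equals the one
over the even chessboard elements `C_{n,+}^I` of the quotient. -/
theorem statement2 (n : ℕ) (hn : 1 ≤ n) (I : Finset ℕ) (hI : I ⊆ Finset.Icc 1 (n - 1))
    (hpar : n % 2 = 1 ∨ (n % 2 = 0 ∧ ∀ j ∈ Finset.Icc 1 (n - 1), j ∉ I → j % 2 = 0)) :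
    gfA n (fun σ => inQuotA n I σ) =
      gfA n (fun σ => chessPlus n σ ∧ inQuotA n I σ) := by
  rw [← sub_eq_zero]
  unfold gfA
  rw [← Finset.sum_sub_distrib]
  rw [Finset.sum_congr rfl (fun σ _ => show _ = if inQuotA n I σ ∧ ¬ chessPlus n σ then
      (-1 : Polynomial ℤ) ^ (ellA n σ) * X ^ (oddLA n σ) else 0 by
    by_cases h1 : inQuotA n I σ <;> by_cases h2 : chessPlus n σ <;>
      simp [h1, h2])]
  apply Finset.sum_ninvolution
    (g := fun σ => if inQuotA n I σ ∧ ¬ chessPlus n σ then phiA n σ else σ)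
  · intro σ
    by_cases hσ : inQuotA n I σ ∧ ¬ chessPlus n σ
    · have hex := exists_good hn I hpar σ hσ.1 hσ.2
      obtain ⟨-, -, hodd, hsign, hquot, hnch, -⟩ := phiA_props hex
      rw [if_pos hσ, if_pos hσ, if_pos ⟨hquot I hσ.1, hnch hσ.2⟩, hodd, hsign]
      ring
    · simp [hσ]
  · intro σ hne
    by_cases hσ : inQuotA n I σ ∧ ¬ chessPlus n σ
    · have hex := exists_good hn I hpar σ hσ.1 hσ.2
      obtain ⟨-, hneq, -, -, -, -, -⟩ := phiA_props hex
      rw [if_pos hσ]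
      exact hneq
    · exact absurd (if_neg hσ) hne
  · intro σ; exact Finset.mem_univ _
  · intro σ
    by_cases hσ : inQuotA n I σ ∧ ¬ chessPlus n σ
    · have hex := exists_good hn I hpar σ hσ.1 hσ.2
      obtain ⟨hinv, -, -, -, hquot, hnch, -⟩ := phiA_props hex
      rw [if_pos hσ, if_pos ⟨hquot I hσ.1, hnch hσ.2⟩]
      exact hinv
    · rw [if_neg hσ, if_neg hσ]
end

section
/- For all n ∈ ℙ and I ⊆ [n-1], the signed generating function over the quotient equals that over the chessboard elements of the quotient: Σ_{σ ∈ S_n^I} (-1)^{ℓ(σ)} x^{L(σ)} = Σ_{σ ∈ C_n^I} (-1)^{ℓ(σ)} x^{L(σ)}. -/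
open Finset Polynomial
open scoped Classical

/-!
If `σ` is not a chessboard element, some consecutive values `a ⋖ b` sit at positions `σ⁻¹ a`,
`σ⁻¹ b` of the same parity. Left multiplication by `swap a b` then changes `ℓ` by one, fixes `L`
(the only inversion it creates or destroys joins two positions of equal parity) and preserves
`S_n^I` (those two positions are not adjacent). It also preserves the parity pattern
`v ↦ σ⁻¹ v mod 2`, which alone decides membership in `C_n`. So on the class of permutations
with a given non-chessboard pattern one pair `a ⋖ b` can be fixed once and for all, and
`σ ↦ swap a b * σ` is a sign-reversing involution of that class.
-/

open Equiv

theorem Equiv.swap_apply_lt_swap_apply_iff_of_covBy {α : Type*} [LinearOrder α] {a b u v : α}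
    (hab : a ⋖ b) (h : ¬(u = a ∧ v = b)) (h' : ¬(u = b ∧ v = a)) :
    swap a b u < swap a b v ↔ u < v := by
  have above {c} (hb : c ≠ b) : b < c ↔ a < c :=
    ⟨hab.lt.trans, fun hc => (not_lt.1 (hab.2 hc)).lt_of_ne (Ne.symm hb)⟩
  have below {c} (ha : c ≠ a) : c < a ↔ c < b :=
    ⟨fun hc => hc.trans hab.lt, fun hc => (hab.le_of_lt hc).lt_of_ne ha⟩
  obtain rfl | huv := eq_or_ne u v
  · simp
  obtain rfl | hua := eq_or_ne u a
  · have hvb : v ≠ b := fun hvb => h ⟨rfl, hvb⟩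
    rw [swap_apply_left, swap_apply_of_ne_of_ne huv.symm hvb, above hvb]
  obtain rfl | hub := eq_or_ne u b
  · have hva : v ≠ a := fun hva => h' ⟨rfl, hva⟩
    rw [swap_apply_right, swap_apply_of_ne_of_ne hva huv.symm, above huv.symm]
  rw [swap_apply_of_ne_of_ne hua hub]
  obtain rfl | hva := eq_or_ne v a
  · rw [swap_apply_left, below hua]
  obtain rfl | hvb := eq_or_ne v b
  · rw [swap_apply_right, below hua]
  rw [swap_apply_of_ne_of_ne hva hvb]

theorem apply_eq_apply_of_forall_covBy {α β : Type*} [LinearOrder α] [SuccOrder α]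
    [IsSuccArchimedean α] {f : α → β} (hf : ∀ a b, a ⋖ b → f a = f b) (x y : α) :
    f x = f y := by
  have hsucc (a : α) : f a = f (Order.succ a) := by
    by_cases ha : IsMax a
    · rw [ha.succ_eq]
    · exact hf a _ (Order.covBy_succ_of_not_isMax ha)
  exact ((Succ.rec_linear (p := fun z => f z = f x) (fun a => by rw [hsucc a]) x y).1 rfl).symm

section

variable {n : ℕ}

def posParity (σ : Perm (Fin n)) (v : Fin n) : ℕ := (σ⁻¹ v : ℕ) % 2

lemma posParity_apply (σ : Perm (Fin n)) (i : Fin n) : posParity σ (σ i) = (i : ℕ) % 2 := by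
  simp [posParity]

lemma posParity_swap_mul {σ : Perm (Fin n)} {a b : Fin n}
    (hpar : posParity σ a = posParity σ b) : posParity (swap a b * σ) = posParity σ := by
  funext v
  simp only [posParity, mul_inv_rev, swap_inv, Perm.mul_apply]
  obtain rfl | hva := eq_or_ne v a
  · rw [swap_apply_left]; exact hpar.symm
  obtain rfl | hvb := eq_or_ne v b
  · rw [swap_apply_right]; exact hpar
  rw [swap_apply_of_ne_of_ne hva hvb]

lemma swap_mul_apply_lt_iff {σ : Perm (Fin n)} {a b : Fin n} (hab : a ⋖ b)
    (hpar : posParity σ a = posParity σ b) {p q : Fin n} (hpq : (p : ℕ) % 2 ≠ (q : ℕ) % 2) :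
    (swap a b * σ) p < (swap a b * σ) q ↔ σ p < σ q := by
  refine swap_apply_lt_swap_apply_iff_of_covBy hab ?_ ?_ <;>
  · rintro ⟨hp, hq⟩
    rw [← hp, ← hq, posParity_apply, posParity_apply] at hpar
    exact hpq (by omega)

lemma oddLA_swap_mul {σ : Perm (Fin n)} {a b : Fin n} (hab : a ⋖ b)
    (hpar : posParity σ a = posParity σ b) : oddLA n (swap a b * σ) = oddLA n σ := by
  unfold oddLA
  congr 1
  refine filter_congr fun p _ => and_congr_right fun _ => ?_
  exact and_congr_left fun hp => swap_mul_apply_lt_iff hab hpar (Ne.symm hp)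

lemma inQuotA_swap_mul {I : Finset ℕ} {σ : Perm (Fin n)} {a b : Fin n} (hab : a ⋖ b)
    (hpar : posParity σ a = posParity σ b) (hσ : inQuotA n I σ) :
    inQuotA n I (swap a b * σ) := by
  intro i j hj hi
  rw [swap_mul_apply_lt_iff hab hpar (by omega)]
  exact hσ i j hj hi

lemma sign_eq_neg_one_pow_ellA (σ : Perm (Fin n)) : Perm.sign σ = (-1) ^ ellA n σ := by
  rw [Perm.sign_eq_prod_prod_Ioi, ellA, ← prod_const, prod_filter, Fintype.prod_prod_type]
  refine Fintype.prod_congr _ _ fun i => ?_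
  rw [← filter_lt_eq_Ioi, prod_filter]
  refine Fintype.prod_congr _ _ fun j => ?_
  by_cases hij : i < j
  · rcases (σ.injective.ne hij.ne).lt_or_gt with h | h <;> simp [hij, h, h.not_gt]
  · simp [hij]

lemma chessPlus_or_chessMinus_iff (σ : Perm (Fin n)) :
    chessPlus n σ ∨ chessMinus n σ ↔ ∀ i j : Fin n, ((i : ℕ) + σ i) % 2 = ((j : ℕ) + σ j) % 2 := by
  refine ⟨?_, fun h => ?_⟩
  · rintro (h | h) i j <;> rw [h i, h j]
  by_cases hodd : ∃ i : Fin n, ((i : ℕ) + σ i) % 2 = 1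
  · obtain ⟨i, hi⟩ := hodd
    exact Or.inr fun j => (h j i).trans hi
  · push Not at hodd
    exact Or.inl fun j => by have := hodd j; omega

lemma chessPlus_or_chessMinus_iff_posParity (σ : Perm (Fin n)) :
    chessPlus n σ ∨ chessMinus n σ ↔ ∀ a b : Fin n, a ⋖ b → posParity σ a ≠ posParity σ b := by
  simp only [chessPlus_or_chessMinus_iff, Fin.covBy_iff, Nat.covBy_iff_add_one_eq]
  refine ⟨fun h a b hab => ?_, fun h i j => ?_⟩
  · obtain ⟨i, rfl⟩ := σ.surjective a
    obtain ⟨j, rfl⟩ := σ.surjective b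
    have := h i j
    rw [posParity_apply, posParity_apply]
    omega
  · have hconst := apply_eq_apply_of_forall_covBy (f := fun v => (posParity σ v + v) % 2)
      (fun a b hab => by
        rw [Fin.covBy_iff, Nat.covBy_iff_add_one_eq] at hab
        have := h a b hab
        unfold posParity at this ⊢
        omega) (σ i) (σ j)
    simp only [posParity_apply] at hconst
    omega

noncomputable def signedWeight (σ : Perm (Fin n)) : ℤ[X] := (-1) ^ ellA n σ * X ^ oddLA n σ

lemma gfA_eq_sum_filter (P : Perm (Fin n) → Prop) :
    gfA n P = ∑ σ with P σ, signedWeight σ :=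
  (sum_filter _ _).symm

lemma signedWeight_swap_mul {σ : Perm (Fin n)} {a b : Fin n} (hab : a ⋖ b)
    (hpar : posParity σ a = posParity σ b) :
    signedWeight (swap a b * σ) = -signedWeight σ := by
  have hsign (τ : Perm (Fin n)) : (-1 : ℤ[X]) ^ ellA n τ = ((Perm.sign τ : ℤ) : ℤ[X]) := by
    rw [sign_eq_neg_one_pow_ellA]
    push_cast
    rfl
  rw [signedWeight, signedWeight, hsign, hsign, Perm.sign_mul, Perm.sign_swap hab.lt.ne,
    oddLA_swap_mul hab hpar]
  push_cast
  ring

lemma sum_signedWeight_eq_zero_of_swap_mul_mem {s : Finset (Perm (Fin n))} {a b : Fin n}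
    (hab : a ⋖ b) (hpar : ∀ σ ∈ s, posParity σ a = posParity σ b)
    (hs : ∀ σ ∈ s, swap a b * σ ∈ s) : ∑ σ ∈ s, signedWeight σ = 0 := by
  refine sum_involution (fun σ _ => swap a b * σ) (fun σ hσ => ?_) (fun σ _ _ => ?_) hs
    (fun σ _ => swap_mul_self_mul a b σ)
  · rw [signedWeight_swap_mul hab (hpar σ hσ), add_neg_cancel]
  · rw [Ne, mul_eq_right, swap_eq_one_iff]
    exact hab.lt.ne

lemma sum_signedWeight_inQuotA_not_chessboard (I : Finset ℕ) :
    ∑ σ with inQuotA n I σ ∧ ¬(chessPlus n σ ∨ chessMinus n σ), signedWeight σ = 0 := by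
  rw [← sum_fiberwise_of_maps_to fun σ hσ => mem_image_of_mem posParity hσ]
  refine sum_eq_zero fun f hf => ?_
  obtain ⟨σ₀, hσ₀, rfl⟩ := mem_image.1 hf
  obtain ⟨a, b, hab, hpar⟩ : ∃ a b, a ⋖ b ∧ posParity σ₀ a = posParity σ₀ b := by
    have := (mem_filter.1 hσ₀).2.2
    rw [chessPlus_or_chessMinus_iff_posParity] at this
    push Not at this
    exact this
  have hparσ {σ : Perm (Fin n)} (hσ : posParity σ = posParity σ₀) :
      posParity σ a = posParity σ b := by
    rw [hσ]
    exact hpar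
  refine sum_signedWeight_eq_zero_of_swap_mul_mem hab (fun σ hσ => hparσ (mem_filter.1 hσ).2)
    fun σ hσ => ?_
  simp only [mem_filter, mem_univ, true_and] at hσ ⊢
  obtain ⟨⟨hquot, hchess⟩, hpat⟩ := hσ
  rw [chessPlus_or_chessMinus_iff_posParity, posParity_swap_mul (hparσ hpat),
    ← chessPlus_or_chessMinus_iff_posParity]
  exact ⟨⟨inQuotA_swap_mul hab (hparσ hpat) hquot, hchess⟩, hpat⟩

end

theorem statement3_general (n : ℕ) (I : Finset ℕ) :
    gfA n (fun σ => inQuotA n I σ) =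
      gfA n (fun σ => (chessPlus n σ ∨ chessMinus n σ) ∧ inQuotA n I σ) := by
  rw [gfA_eq_sum_filter, gfA_eq_sum_filter,
    ← sum_filter_add_sum_filter_not _ (fun σ => chessPlus n σ ∨ chessMinus n σ),
    filter_filter, filter_filter, sum_signedWeight_inQuotA_not_chessboard, add_zero]
  congr 1
  ext σ
  simp only [mem_filter, mem_univ, true_and, and_comm]

/-- For all `n ∈ ℙ` and `I ⊆ [n-1]`, the signed generating function over
`S_n^I` equals the one over the chessboard elements `C_n^I` of the quotient. -/
theorem statement3 (n : ℕ) (hn : 1 ≤ n) (I : Finset ℕ) (hI : I ⊆ Finset.Icc 1 (n - 1)) :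
    gfA n (fun σ => inQuotA n I σ) =
      gfA n (fun σ => (chessPlus n σ ∨ chessMinus n σ) ∧ inQuotA n I σ) :=
  statement3_general n I
end

section
/- Let I ⊆ [n-1] and a ∈ [2, n-1] with [a-2, a+1] ∩ I = ∅. Then Σ (-1)^{ℓ(σ)} x^{L(σ)} = 0 where the sum runs over σ ∈ S_n^I with σ(a) = n, and likewise the sum over σ ∈ S_n^I with σ(a) = 1 vanishes. -/
open Finset Polynomial
open scoped Classical

/-!
Let `τ` swap the two neighbours `m - 1`, `m + 1` of the position `m` carrying the extreme value.
Right multiplication by `τ` keeps `σ(m)`, preserves `S_n^I` because `I` avoids the generators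
touching those positions, and flips the parity of `ℓ`. It also preserves `L`: away from `m`,
`τ` relabels odd inversions to odd inversions, since it preserves parities and, apart from pairs
through `m`, reverses only the order of `(m - 1, m + 1)`, whose entries have equal parity; a pair
through `m` is an inversion of `σ` exactly when it is one of `στ`, because `σ(m)` is a maximum
or a minimum. Hence the signed sum equals its own negative.
-/

open Equiv

section SignedSum

variable {n : ℕ}

theorem neg_one_pow_ellA_eq_signAux (σ : Perm (Fin n)) :
    (-1 : ℤˣ) ^ ellA n σ = Perm.signAux σ := by
  rw [Perm.signAux, prod_ite, prod_const, prod_const_one, mul_one]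
  congr 1
  refine card_nbij' (fun x => ⟨x.2, x.1⟩) (fun x => (x.2, x.1)) ?_ ?_ (fun _ _ => rfl)
    (fun _ _ => rfl)
  · intro x hx
    simp only [coe_filter, Set.mem_ofPred_eq, mem_univ, true_and, Perm.mem_finPairsLT] at hx ⊢
    exact ⟨hx.1, hx.2.le⟩
  · intro x hx
    simp only [coe_filter, Set.mem_ofPred_eq, mem_univ, true_and, Perm.mem_finPairsLT] at hx ⊢
    exact ⟨hx.1, lt_of_le_of_ne hx.2 (σ.injective.ne hx.1.ne')⟩

theorem neg_one_pow_ellA_mul_swap {R : Type*} [Ring R] (σ : Perm (Fin n)) {x y : Fin n}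
    (hxy : x ≠ y) : (-1 : R) ^ ellA n (σ * swap x y) = -(-1) ^ ellA n σ := by
  have h : (-1 : ℤˣ) ^ ellA n (σ * swap x y) = -(-1) ^ ellA n σ := by
    rw [neg_one_pow_ellA_eq_signAux, neg_one_pow_ellA_eq_signAux, Perm.signAux_mul,
      Perm.signAux_swap hxy, mul_neg_one]
  simpa using congrArg (fun u : ℤˣ => ((u : ℤ) : R)) h

theorem gfA_eq_zero_of_mul_swap {P : Perm (Fin n) → Prop} {x y : Fin n} (hxy : x ≠ y)
    (hP : ∀ σ, P σ → P (σ * swap x y))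
    (hL : ∀ σ, P σ → oddLA n (σ * swap x y) = oddLA n σ) : gfA n P = 0 := by
  set f : Perm (Fin n) → ℤ[X] :=
    fun σ => if P σ then (-1 : ℤ[X]) ^ ellA n σ * X ^ oddLA n σ else 0
  have hf : ∀ σ, f (σ * swap x y) = -f σ := by
    intro σ
    by_cases hσ : P σ
    · simp [f, hσ, hP σ hσ, hL σ hσ, neg_one_pow_ellA_mul_swap σ hxy]
    · have : ¬P (σ * swap x y) := fun h => hσ (mul_swap_mul_self x y σ ▸ hP _ h)
      simp [f, hσ, this]
  have hneg : gfA n P = -gfA n P := by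
    calc gfA n P = ∑ σ, f (σ * swap x y) := (Equiv.sum_comp (Equiv.mulRight (swap x y)) f).symm
      _ = -gfA n P := by simp only [hf, sum_neg_distrib]; rfl
  exact CharZero.eq_neg_self_iff.mp hneg

end SignedSum

section Pivot

variable {n : ℕ} {p m q : Fin n}

theorem swap_apply_mod_two (hq : (q : ℕ) = p + 2) (x : Fin n) :
    (swap p q x : ℕ) % 2 = (x : ℕ) % 2 := by
  rw [swap_apply_def]
  split_ifs <;> subst_vars <;> omega

theorem swap_apply_pivot (hm : (m : ℕ) = p + 1) (hq : (q : ℕ) = p + 2) : swap p q m = m :=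
  swap_apply_of_ne_of_ne (fun h => by rw [Fin.ext_iff] at h; omega)
    (fun h => by rw [Fin.ext_iff] at h; omega)

theorem swap_lt_swap_of_mod_two_ne (hm : (m : ℕ) = p + 1) (hq : (q : ℕ) = p + 2)
    {i j : Fin n} (hij : i < j) (hpar : (i : ℕ) % 2 ≠ (j : ℕ) % 2) (hi : i ≠ m)
    (hj : j ≠ m) : swap p q i < swap p q j := by
  rw [swap_apply_def, swap_apply_def]
  split_ifs <;> simp only [Fin.lt_def, ne_eq, Fin.ext_iff] at * <;> omega

theorem lt_iff_of_extreme {ρ σ : Perm (Fin n)} (hρ : ρ m = σ m)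
    (hσ : IsMax (σ m) ∨ IsMin (σ m)) {x : Fin n} (hx : x ≠ m) :
    (ρ x < ρ m ↔ σ x < σ m) ∧ (ρ m < ρ x ↔ σ m < σ x) := by
  have hρx := ρ.injective.ne hx
  have hσx := σ.injective.ne hx
  rw [hρ] at hρx ⊢
  rcases hσ with h | h
  · simp [h.not_lt, lt_of_le_of_ne (not_lt.mp h.not_lt) hρx,
      lt_of_le_of_ne (not_lt.mp h.not_lt) hσx]
  · simp [h.not_lt, lt_of_le_of_ne (not_lt.mp h.not_lt) hρx.symm,
      lt_of_le_of_ne (not_lt.mp h.not_lt) hσx.symm]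

def oddInversions (σ : Perm (Fin n)) : Finset (Fin n × Fin n) :=
  univ.filter fun x => x.1 < x.2 ∧ σ x.2 < σ x.1 ∧ (x.1 : ℕ) % 2 ≠ (x.2 : ℕ) % 2

theorem oddLA_eq_card_oddInversions (σ : Perm (Fin n)) :
    oddLA n σ = (oddInversions σ).card := rfl

def swapOffPivot (p q m : Fin n) (x : Fin n × Fin n) : Fin n × Fin n :=
  if x.1 = m ∨ x.2 = m then x else (swap p q x.1, swap p q x.2)

theorem swapOffPivot_swapOffPivot (hm : (m : ℕ) = p + 1) (hq : (q : ℕ) = p + 2)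
    (x : Fin n × Fin n) : swapOffPivot p q m (swapOffPivot p q m x) = x := by
  have hτ := swap_apply_pivot hm hq
  by_cases hx : x.1 = m ∨ x.2 = m
  · simp [swapOffPivot, hx]
  · have hx' : ¬(swap p q x.1 = m ∨ swap p q x.2 = m) := by
      rwa [← hτ, (swap p q).injective.eq_iff, (swap p q).injective.eq_iff]
    simp [swapOffPivot, hx, hx']

theorem swapOffPivot_mem_oddInversions (hm : (m : ℕ) = p + 1) (hq : (q : ℕ) = p + 2)
    {σ : Perm (Fin n)} (hσ : IsMax (σ m) ∨ IsMin (σ m)) {x : Fin n × Fin n}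
    (hx : x ∈ oddInversions (σ * swap p q)) : swapOffPivot p q m x ∈ oddInversions σ := by
  simp only [oddInversions, mem_filter, mem_univ, true_and] at hx ⊢
  obtain ⟨hlt, hinv, hpar⟩ := hx
  by_cases hxm : x.1 = m ∨ x.2 = m
  · have hρ : (σ * swap p q) m = σ m := by rw [Perm.mul_apply, swap_apply_pivot hm hq]
    rw [swapOffPivot, if_pos hxm]
    refine ⟨hlt, ?_, hpar⟩
    rcases hxm with h | h
    · rw [h] at hinv ⊢
      exact (lt_iff_of_extreme hρ hσ (h ▸ hlt.ne')).1.mp hinv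
    · rw [h] at hinv ⊢
      exact (lt_iff_of_extreme hρ hσ (h ▸ hlt.ne)).2.mp hinv
  · rw [swapOffPivot, if_neg hxm]
    push Not at hxm
    exact ⟨swap_lt_swap_of_mod_two_ne hm hq hlt hpar hxm.1 hxm.2, hinv,
      by rwa [swap_apply_mod_two hq, swap_apply_mod_two hq]⟩

theorem oddLA_mul_swap_of_extreme (hm : (m : ℕ) = p + 1) (hq : (q : ℕ) = p + 2)
    {σ : Perm (Fin n)} (hσ : IsMax (σ m) ∨ IsMin (σ m)) :
    oddLA n (σ * swap p q) = oddLA n σ := by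
  have hστ : IsMax ((σ * swap p q) m) ∨ IsMin ((σ * swap p q) m) := by
    rwa [Perm.mul_apply, swap_apply_pivot hm hq]
  rw [oddLA_eq_card_oddInversions, oddLA_eq_card_oddInversions]
  refine card_nbij' (swapOffPivot p q m) (swapOffPivot p q m) ?_ ?_
    (fun x _ => swapOffPivot_swapOffPivot hm hq x)
    (fun x _ => swapOffPivot_swapOffPivot hm hq x)
  · exact fun x hx => swapOffPivot_mem_oddInversions hm hq hσ hx
  · intro x hx
    rw [← mul_swap_mul_self p q σ] at hx
    exact swapOffPivot_mem_oddInversions hm hq hστ hx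

-- Generator `k` compares the positions `k - 1` and `k`, so `[p, p + 3]` are those touching `p`
-- or `p + 2`.
theorem inQuotA_mul_swap {I : Finset ℕ} (hq : (q : ℕ) = p + 2)
    (hI : ∀ k, (p : ℕ) ≤ k → k ≤ p + 3 → k ∉ I) {σ : Perm (Fin n)}
    (hσ : inQuotA n I σ) : inQuotA n I (σ * swap p q) := by
  intro i j hij hk
  have hfix : ∀ x : Fin n, ((x : ℕ) = i ∨ (x : ℕ) = j) → swap p q x = x := by
    intro x hx
    refine swap_apply_of_ne_of_ne ?_ ?_ <;> rintro rfl <;> exact hI _ (by omega) (by omega) hk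
  rw [Perm.mul_apply, Perm.mul_apply, hfix i (.inl rfl), hfix j (.inr rfl)]
  exact hσ i j hij hk

theorem gfA_inQuotA_apply_eq_extreme {I : Finset ℕ} {v : Fin n}
    (hm : (m : ℕ) = p + 1) (hq : (q : ℕ) = p + 2) (hv : IsMax v ∨ IsMin v)
    (hI : ∀ k, (p : ℕ) ≤ k → k ≤ p + 3 → k ∉ I) :
    gfA n (fun σ => inQuotA n I σ ∧ σ m = v) = 0 := by
  have hpq : p ≠ q := fun h => by rw [Fin.ext_iff] at h; omega
  refine gfA_eq_zero_of_mul_swap hpq (fun σ hσ => ⟨inQuotA_mul_swap hq hI hσ.1, ?_⟩)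
    (fun σ hσ => oddLA_mul_swap_of_extreme hm hq (hσ.2 ▸ hv))
  rw [Perm.mul_apply, swap_apply_pivot hm hq, hσ.2]

end Pivot

/-- Lemma 3.2. Let `I ⊆ [n-1]`, `a ∈ [2,n-1]` with `[a-2,a+1] ∩ I = ∅`.
Then the signed generating functions over `{σ ∈ S_n^I : σ(a) = n}` and over
`{σ ∈ S_n^I : σ(a) = 1}` both vanish. (Positions and values are 1-based; in the 0-based
model the position is `a-1`, the value `n` is `n-1` and the value `1` is `0`.) -/
theorem statement4 (n : ℕ) (I : Finset ℕ)
    (a : ℕ) (ha : 2 ≤ a) (ha' : a ≤ n - 1)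
    (hdisj : ∀ j, a - 2 ≤ j → j ≤ a + 1 → j ∉ I) :
    gfA n (fun σ => inQuotA n I σ ∧
        σ ⟨a - 1, by omega⟩ = ⟨n - 1, by omega⟩) = 0 ∧
    gfA n (fun σ => inQuotA n I σ ∧
        σ ⟨a - 1, by omega⟩ = ⟨0, by omega⟩) = 0 := by
  have hI : ∀ k, ((⟨a - 2, by omega⟩ : Fin n) : ℕ) ≤ k →
      k ≤ (⟨a - 2, by omega⟩ : Fin n) + 3 → k ∉ I :=
    fun k h₁ h₂ => hdisj k h₁ (by simp only at h₂; omega)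
  have hm : ((⟨a - 1, by omega⟩ : Fin n) : ℕ) = (⟨a - 2, by omega⟩ : Fin n) + 1 := by
    simp only; omega
  have hq : ((⟨a, by omega⟩ : Fin n) : ℕ) = (⟨a - 2, by omega⟩ : Fin n) + 2 := by
    simp only; omega
  have hmax : IsMax (⟨n - 1, by omega⟩ : Fin n) :=
    fun b _ => Fin.le_def.mpr (by simp only; omega)
  have hmin : IsMin (⟨0, by omega⟩ : Fin n) := fun b _ => Fin.le_def.mpr (Nat.zero_le _)
  exact ⟨gfA_inQuotA_apply_eq_extreme hm hq (.inl hmax) hI,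
    gfA_inQuotA_apply_eq_extreme hm hq (.inr hmin) hI⟩
end

section
/- Let I ⊆ [n-1], i ∈ ℙ, k ∈ ℕ be such that [i+1, i+2k+1] is a connected component of I and i-1 ∉ I. Set Ī := (I \ {i+2k+1}) ∪ {i}. Then Σ_{σ ∈ S_n^I} (-1)^{ℓ(σ)} x^{L(σ)} = Σ_{σ ∈ S_n^{I∪Ī}} (-1)^{ℓ(σ)} x^{L(σ)} = Σ_{σ ∈ S_n^{Ī}} (-1)^{ℓ(σ)} x^{L(σ)}. -/
open Finset Polynomial
open scoped Classical

section Swap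
variable {n : ℕ}

lemma swap_parity (p q x : Fin n) (hpar : (p:ℕ) % 2 = (q:ℕ) % 2) :
    ((Equiv.swap p q x : Fin n):ℕ) % 2 = (x:ℕ) % 2 := by
  rcases eq_or_ne x p with rfl | hxp
  · rw [Equiv.swap_apply_left]; omega
  rcases eq_or_ne x q with rfl | hxq
  · rw [Equiv.swap_apply_right]; omega
  · rw [Equiv.swap_apply_of_ne_of_ne hxp hxq]

/-- the pair bijection used to compare inversion sets of `σ` and `σ * swap p q`. -/
def Hmap (p q : Fin n) (ab : Fin n × Fin n) : Fin n × Fin n :=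
  if p ≤ ab.1 ∧ ab.2 ≤ q then ab else (Equiv.swap p q ab.1, Equiv.swap p q ab.2)

lemma Hmap_invol (p q : Fin n) (hpq : p < q) (ab : Fin n × Fin n) :
    Hmap p q (Hmap p q ab) = ab := by
  obtain ⟨a, b⟩ := ab
  by_cases h : p ≤ a ∧ b ≤ q
  · simp [Hmap, h]
  · have hcond : ¬ (p ≤ Equiv.swap p q a ∧ Equiv.swap p q b ≤ q) := by
      rcases not_and_or.1 h with h1 | h1
      · have h1 : a < p := lt_of_not_ge h1
        have ha : Equiv.swap p q a = a :=
          Equiv.swap_apply_of_ne_of_ne (ne_of_lt h1) (ne_of_lt (h1.trans hpq))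
        exact fun hc => absurd (ha ▸ hc.1) (not_le.2 h1)
      · have h1 : q < b := lt_of_not_ge h1
        have hb : Equiv.swap p q b = b :=
          Equiv.swap_apply_of_ne_of_ne (ne_of_gt (hpq.trans h1)) (ne_of_gt h1)
        exact fun hc => absurd (hb ▸ hc.2) (not_le.2 h1)
    simp only [Hmap, if_neg h, if_neg hcond, Equiv.swap_apply_self]

lemma Hmap_mem (σ : Equiv.Perm (Fin n)) (p q : Fin n) (hpq : p < q)
    (hpar : (p:ℕ) % 2 = (q:ℕ) % 2)
    (hbet : ∀ r : Fin n, p < r → r < q → (σ r < σ p ↔ σ r < σ q))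
    (a b : Fin n) (hab : a < b) (hne : ¬(a = p ∧ b = q))
    (hinv : σ (Equiv.swap p q b) < σ (Equiv.swap p q a)) :
    (Hmap p q (a, b)).1 < (Hmap p q (a, b)).2 ∧
    σ (Hmap p q (a, b)).2 < σ (Hmap p q (a, b)).1 ∧
    ((Hmap p q (a, b)).1 : ℕ) % 2 = (a:ℕ) % 2 ∧
    ((Hmap p q (a, b)).2 : ℕ) % 2 = (b:ℕ) % 2 ∧
    ¬((Hmap p q (a, b)).1 = p ∧ (Hmap p q (a, b)).2 = q) := by
  have hparx : ∀ x : Fin n, (p:ℕ) % 2 = (q:ℕ) % 2 → ((Equiv.swap p q x : Fin n):ℕ) % 2 = (x:ℕ) % 2 :=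
    fun x hp => swap_parity p q x hp
  by_cases h : p ≤ a ∧ b ≤ q
  · obtain ⟨hpa, hbq⟩ := h
    have hH : Hmap p q (a, b) = (a, b) := if_pos ⟨hpa, hbq⟩
    rw [hH]
    refine ⟨hab, ?_, rfl, rfl, hne⟩
    rcases eq_or_lt_of_le hpa with hap | hap
    · -- a = p
      rcases eq_or_lt_of_le hbq with hbq' | hbq'
      · exact absurd ⟨hap.symm, hbq'⟩ hne
      · -- a = p, b < q
        have hbp : b ≠ p := ne_of_gt (hap ▸ hab)
        have hbqne : b ≠ q := ne_of_lt hbq'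
        rw [Equiv.swap_apply_of_ne_of_ne hbp hbqne, ← hap, Equiv.swap_apply_left] at hinv
        have h2 := (hbet b (hap ▸ hab) hbq').2 hinv
        show σ b < σ a
        rwa [← hap]
    · -- p < a
      rcases eq_or_lt_of_le hbq with hbq' | hbq'
      · -- b = q, p < a
        have hap' : a ≠ p := ne_of_gt hap
        have haq : a ≠ q := ne_of_lt (hbq' ▸ hab)
        rw [Equiv.swap_apply_of_ne_of_ne hap' haq, ← hbq', Equiv.swap_apply_right] at hinv
        -- hinv : σ p < σ a ; want σ b = σ q < σ a
        have h1 : ¬ σ a < σ p := not_lt.2 (le_of_lt hinv)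
        have h2 : ¬ σ a < σ q := fun hc => h1 ((hbet a hap (hbq' ▸ hab)).2 hc)
        have h3 : σ a ≠ σ q := fun hc => (ne_of_lt (hbq' ▸ hab)) (σ.injective hc)
        show σ b < σ a
        rw [hbq']
        exact lt_of_le_of_ne (not_lt.1 h2) (Ne.symm h3)
      · -- p < a, b < q
        rw [Equiv.swap_apply_of_ne_of_ne (ne_of_gt hap) (ne_of_lt (hab.trans hbq')),
          Equiv.swap_apply_of_ne_of_ne (ne_of_gt (hap.trans hab)) (ne_of_lt hbq')] at hinv
        exact hinv
  · have hH : Hmap p q (a, b) = (Equiv.swap p q a, Equiv.swap p q b) := if_neg h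
    rw [hH]
    rcases not_and_or.1 h with h1 | h1
    · have h1 : a < p := lt_of_not_ge h1
      have hwa : Equiv.swap p q a = a :=
        Equiv.swap_apply_of_ne_of_ne (ne_of_lt h1) (ne_of_lt (h1.trans hpq))
      have hord : Equiv.swap p q a < Equiv.swap p q b := by
        rw [hwa]
        rcases eq_or_ne b p with rfl | hbp
        · rw [Equiv.swap_apply_left]; exact h1.trans hpq
        rcases eq_or_ne b q with rfl | hbq2
        · rw [Equiv.swap_apply_right]; exact h1
        · rw [Equiv.swap_apply_of_ne_of_ne hbp hbq2]; exact hab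
      refine ⟨hord, hinv, hparx _ hpar, hparx _ hpar, ?_⟩
      rintro ⟨hc, -⟩
      rw [hwa] at hc
      exact absurd hc (ne_of_lt h1)
    · have h1 : q < b := lt_of_not_ge h1
      have hwb : Equiv.swap p q b = b :=
        Equiv.swap_apply_of_ne_of_ne (ne_of_gt (hpq.trans h1)) (ne_of_gt h1)
      have hord : Equiv.swap p q a < Equiv.swap p q b := by
        rw [hwb]
        rcases eq_or_ne a p with rfl | hap
        · rw [Equiv.swap_apply_left]; exact h1
        rcases eq_or_ne a q with rfl | haq
        · rw [Equiv.swap_apply_right]; exact hpq.trans h1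
        · rw [Equiv.swap_apply_of_ne_of_ne hap haq]; exact hab
      refine ⟨hord, hinv, hparx _ hpar, hparx _ hpar, ?_⟩
      rintro ⟨-, hc⟩
      rw [hwb] at hc
      exact absurd hc (ne_of_gt h1)
end Swap

lemma swap_core (σ : Equiv.Perm (Fin n)) (p q : Fin n) (hpq : p < q)
    (hpar : (p:ℕ) % 2 = (q:ℕ) % 2)
    (hbet : ∀ r : Fin n, p < r → r < q → (σ r < σ p ↔ σ r < σ q)) :
    oddLA n (σ * Equiv.swap p q) = oddLA n σ ∧
    (-1 : Polynomial ℤ) ^ (ellA n (σ * Equiv.swap p q)) = -(-1 : Polynomial ℤ) ^ (ellA n σ) := by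
  set τ := σ * Equiv.swap p q with hτ
  have hτap : ∀ x, τ x = σ (Equiv.swap p q x) := fun x => Equiv.Perm.mul_apply σ _ x
  have hswapswap : ∀ x, Equiv.swap p q (Equiv.swap p q x) = x := fun x => Equiv.swap_apply_self _ _ _
  have hbetτ : ∀ r : Fin n, p < r → r < q → (τ r < τ p ↔ τ r < τ q) := by
    intro r h1 h2
    rw [hτap, hτap, hτap, Equiv.swap_apply_left, Equiv.swap_apply_right,
      Equiv.swap_apply_of_ne_of_ne (ne_of_gt h1) (ne_of_lt h2)]
    exact (hbet r h1 h2).symm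
  have hτinv : ∀ a b : Fin n, (τ b < τ a) ↔ σ (Equiv.swap p q b) < σ (Equiv.swap p q a) := by
    intro a b; rw [hτap, hτap]
  have hστ : ∀ a b : Fin n, (σ b < σ a) ↔ τ (Equiv.swap p q b) < τ (Equiv.swap p q a) := by
    intro a b; rw [hτap, hτap, hswapswap, hswapswap]
  constructor
  · -- oddL preserved
    apply Finset.card_bij' (fun ab _ => Hmap p q ab) (fun ab _ => Hmap p q ab)
    · rintro ⟨a, b⟩ hab
      simp only [Finset.mem_filter, Finset.mem_univ, true_and] at hab ⊢
      obtain ⟨h1, h2, h3⟩ := hab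
      have hne : ¬(a = p ∧ b = q) := by
        rintro ⟨rfl, rfl⟩; exact h3 hpar
      obtain ⟨c1, c2, c3, c4, c5⟩ :=
        Hmap_mem σ p q hpq hpar hbet a b h1 hne ((hτinv a b).1 h2)
      exact ⟨c1, c2, by rw [c3, c4]; exact h3⟩
    · rintro ⟨a, b⟩ hab
      simp only [Finset.mem_filter, Finset.mem_univ, true_and] at hab ⊢
      obtain ⟨h1, h2, h3⟩ := hab
      have hne : ¬(a = p ∧ b = q) := by
        rintro ⟨rfl, rfl⟩; exact h3 hpar
      obtain ⟨c1, c2, c3, c4, c5⟩ :=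
        Hmap_mem τ p q hpq hpar hbetτ a b h1 hne (((hστ a b).1 h2))
      exact ⟨c1, c2, by rw [c3, c4]; exact h3⟩
    · rintro ⟨a, b⟩ _; exact Hmap_invol p q hpq _
    · rintro ⟨a, b⟩ _; exact Hmap_invol p q hpq _
  · -- sign flips
    have hcard : ∀ (ρ : Equiv.Perm (Fin n)),
        (Finset.univ.filter (fun ab : Fin n × Fin n => ab.1 < ab.2 ∧ ρ ab.2 < ρ ab.1)).card
          = ((Finset.univ.filter (fun ab : Fin n × Fin n => ab.1 < ab.2 ∧ ρ ab.2 < ρ ab.1)).erase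
              (p, q)).card + (if ρ q < ρ p then 1 else 0) := by
      intro ρ
      by_cases hm : (p, q) ∈ (Finset.univ.filter (fun ab : Fin n × Fin n => ab.1 < ab.2 ∧ ρ ab.2 < ρ ab.1))
      · rw [if_pos (by simpa [hpq] using hm)]
        rw [Finset.card_erase_of_mem hm]
        have : 1 ≤ (Finset.univ.filter (fun ab : Fin n × Fin n => ab.1 < ab.2 ∧ ρ ab.2 < ρ ab.1)).card :=
          Finset.card_pos.2 ⟨_, hm⟩
        omega
      · rw [if_neg (by intro hc; exact hm (Finset.mem_filter.2 ⟨Finset.mem_univ _, hpq, hc⟩))]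
        rw [Finset.erase_eq_of_notMem hm]
        omega
    have herase :
        ((Finset.univ.filter (fun ab : Fin n × Fin n => ab.1 < ab.2 ∧ τ ab.2 < τ ab.1)).erase (p, q)).card
          = ((Finset.univ.filter (fun ab : Fin n × Fin n => ab.1 < ab.2 ∧ σ ab.2 < σ ab.1)).erase (p, q)).card := by
      apply Finset.card_bij' (fun ab _ => Hmap p q ab) (fun ab _ => Hmap p q ab)
      · rintro ⟨a, b⟩ hab
        rw [Finset.mem_erase, Finset.mem_filter] at hab ⊢
        obtain ⟨hne0, -, h1, h2⟩ := hab
        have hne : ¬(a = p ∧ b = q) := by rintro ⟨rfl, rfl⟩; exact hne0 rfl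
        obtain ⟨c1, c2, -, -, c5⟩ := Hmap_mem σ p q hpq hpar hbet a b h1 hne ((hτinv a b).1 h2)
        refine ⟨?_, Finset.mem_univ _, c1, c2⟩
        intro hc; exact c5 (by rw [hc]; exact ⟨rfl, rfl⟩)
      · rintro ⟨a, b⟩ hab
        rw [Finset.mem_erase, Finset.mem_filter] at hab ⊢
        obtain ⟨hne0, -, h1, h2⟩ := hab
        have hne : ¬(a = p ∧ b = q) := by rintro ⟨rfl, rfl⟩; exact hne0 rfl
        obtain ⟨c1, c2, -, -, c5⟩ := Hmap_mem τ p q hpq hpar hbetτ a b h1 hne ((hστ a b).1 h2)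
        refine ⟨?_, Finset.mem_univ _, c1, c2⟩
        intro hc; exact c5 (by rw [hc]; exact ⟨rfl, rfl⟩)
      · rintro ⟨a, b⟩ _; exact Hmap_invol p q hpq _
      · rintro ⟨a, b⟩ _; exact Hmap_invol p q hpq _
    have hτpq : τ q = σ p := by rw [hτap, Equiv.swap_apply_right]
    have hτqp : τ p = σ q := by rw [hτap, Equiv.swap_apply_left]
    have hne : σ p ≠ σ q := fun hc => (ne_of_lt hpq) (σ.injective hc)
    have h1 := hcard τ
    have h2 := hcard σ
    rw [hτpq, hτqp] at h1
    unfold ellA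
    by_cases hcase : σ q < σ p
    · rw [h1, h2, herase, if_pos hcase, if_neg (not_lt.2 (le_of_lt hcase))]
      simp [pow_add]
    · rw [h1, h2, herase, if_neg hcase,
        if_pos (lt_of_le_of_ne (not_lt.1 hcase) hne)]
      simp [pow_add]

lemma cardFilterIco (a m : ℕ) (h : a + m ≤ n) :
    (Finset.univ.filter (fun x : Fin n => a ≤ (x:ℕ) ∧ (x:ℕ) < a + m)).card = m := by
  have : (Finset.univ.filter (fun x : Fin n => a ≤ (x:ℕ) ∧ (x:ℕ) < a + m)).card
      = (Finset.Ico a (a + m)).card := by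
    refine Finset.card_bij (fun x _ => (x : ℕ)) ?_ ?_ ?_
    · intro x hx
      simp only [Finset.mem_filter] at hx
      exact Finset.mem_Ico.2 ⟨hx.2.1, hx.2.2⟩
    · intro x hx y hy hxy
      exact Fin.val_injective hxy
    · intro y hy
      rw [Finset.mem_Ico] at hy
      exact ⟨⟨y, by omega⟩, Finset.mem_filter.2 ⟨Finset.mem_univ _, hy.1, hy.2⟩, rfl⟩
  rw [this, Nat.card_Ico]
  omega

lemma initSeg (σ : Equiv.Perm (Fin n)) (a D : ℕ) (s : Fin n)
    (hs : ¬(a ≤ (s:ℕ) ∧ (s:ℕ) ≤ a + D)) (hD : a + D < n)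
    (hmono : ∀ x y : Fin n, a ≤ (x:ℕ) → (y:ℕ) ≤ a + D → x < y → σ x < σ y) :
    ∀ x : Fin n, a ≤ (x:ℕ) → (x:ℕ) ≤ a + D →
      (σ x < σ s ↔ (x:ℕ) < a +
        (Finset.univ.filter (fun z : Fin n => a ≤ (z:ℕ) ∧ (z:ℕ) ≤ a + D ∧ σ z < σ s)).card) := by
  intro x hx1 hx2
  set F := Finset.univ.filter (fun z : Fin n => a ≤ (z:ℕ) ∧ (z:ℕ) ≤ a + D ∧ σ z < σ s) with hF
  constructor
  · intro hlt
    have hsub : (Finset.univ.filter (fun z : Fin n => a ≤ (z:ℕ) ∧ (z:ℕ) < a + ((x:ℕ) - a + 1))) ⊆ F := by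
      intro z hz
      simp only [Finset.mem_filter] at hz
      obtain ⟨-, hz1, hz2⟩ := hz
      have hz3 : (z:ℕ) ≤ (x:ℕ) := by omega
      refine Finset.mem_filter.2 ⟨Finset.mem_univ _, hz1, by omega, ?_⟩
      rcases eq_or_lt_of_le hz3 with hzx | hzx
      · have : z = x := Fin.val_injective hzx
        rw [this]; exact hlt
      · exact (hmono z x hz1 hx2 hzx).trans hlt
    have hcard := Finset.card_le_card hsub
    rw [cardFilterIco a ((x:ℕ) - a + 1) (by omega)] at hcard
    omega
  · intro hlt
    by_contra hcon
    have hxs : σ s < σ x := by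
      rcases lt_or_eq_of_le (not_lt.1 hcon) with h1 | h1
      · exact h1
      · exfalso
        have : s = x := σ.injective h1
        exact hs (this ▸ ⟨hx1, hx2⟩)
    have hsub : F ⊆ (Finset.univ.filter (fun z : Fin n => a ≤ (z:ℕ) ∧ (z:ℕ) < a + ((x:ℕ) - a))) := by
      intro z hz
      simp only [hF, Finset.mem_filter] at hz
      obtain ⟨-, hz1, hz2, hz3⟩ := hz
      refine Finset.mem_filter.2 ⟨Finset.mem_univ _, hz1, ?_⟩
      have hzx : z < x := by
        by_contra hc
        rcases lt_or_eq_of_le (not_lt.1 hc) with h1 | h1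
        · exact absurd ((hmono x z hx1 hz2 h1).trans (hz3.trans hxs)) (lt_irrefl _)
        · rw [← h1] at hz3; exact absurd (hz3.trans hxs) (lt_irrefl _)
      have : (z:ℕ) < (x:ℕ) := hzx
      omega
    have hcard := Finset.card_le_card hsub
    rw [cardFilterIco a ((x:ℕ) - a) (by omega)] at hcard
    omega

lemma quotMono (J : Finset ℕ) (σ : Equiv.Perm (Fin n)) (h : inQuotA n J σ)
    (a D : ℕ) (hJ : ∀ j : ℕ, a + 1 ≤ j → j ≤ a + D → j ∈ J) (hD : a + D < n) :
    ∀ x y : Fin n, a ≤ (x:ℕ) → (y:ℕ) ≤ a + D → x < y → σ x < σ y := by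
  have step : ∀ (x : ℕ) (hx1 : a ≤ x) (hx2 : x + 1 ≤ a + D) (h1 : x < n) (h2 : x + 1 < n),
      σ ⟨x, h1⟩ < σ ⟨x + 1, h2⟩ := by
    intro x hx1 hx2 h1 h2
    exact h ⟨x, h1⟩ ⟨x + 1, h2⟩ rfl (hJ (x + 1) (by omega) (by omega))
  have chain : ∀ (d : ℕ), 1 ≤ d → ∀ (x : ℕ) (hx : a ≤ x) (hxd : x + d ≤ a + D)
      (h1 : x < n) (h2 : x + d < n), σ ⟨x, h1⟩ < σ ⟨x + d, h2⟩ := by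
    intro d
    induction d with
    | zero => omega
    | succ e ih =>
      intro _ x hx hxd h1 h2
      rcases Nat.eq_zero_or_pos e with rfl | he
      · exact step x hx (by omega) h1 h2
      · have h3 : x + e < n := by omega
        have := ih he x hx (by omega) h1 h3
        have h4 : σ ⟨x + e, h3⟩ < σ ⟨x + e + 1, by omega⟩ := step (x + e) (by omega) (by omega) h3 (by omega)
        have h5 : (⟨x + e + 1, by omega⟩ : Fin n) = ⟨x + (e + 1), h2⟩ := by
          apply Fin.ext; simp; omega
        rw [h5] at h4
        exact this.trans h4
  intro x y hx hy hxy
  have hd : 1 ≤ (y:ℕ) - (x:ℕ) := by omega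
  have := chain ((y:ℕ) - (x:ℕ)) hd (x:ℕ) hx (by omega) x.isLt (by omega)
  have h5 : (⟨(x:ℕ) + ((y:ℕ) - (x:ℕ)), by omega⟩ : Fin n) = y := by
    apply Fin.ext; simp; omega
  have h6 : (⟨(x:ℕ), x.isLt⟩ : Fin n) = x := Fin.eta x x.isLt
  rwa [h5, h6] at this

lemma inQuot_insert (J : Finset ℕ) (σ : Equiv.Perm (Fin n)) (j : ℕ) (hj1 : 1 ≤ j) (hjn : j < n) :
    inQuotA n (insert j J) σ ↔
      (inQuotA n J σ ∧ σ ⟨j - 1, by omega⟩ < σ ⟨j, hjn⟩) := by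
  constructor
  · intro h
    refine ⟨fun x y hxy hm => h x y hxy (Finset.mem_insert_of_mem hm), ?_⟩
    exact h ⟨j - 1, by omega⟩ ⟨j, hjn⟩ (by simp; omega) (by simp [Finset.mem_insert]; omega)
  · rintro ⟨h1, h2⟩ x y hxy hm
    rcases Finset.mem_insert.1 hm with hj | hj
    · have hx : x = ⟨j - 1, by omega⟩ := Fin.ext (by simp; omega)
      have hy : y = ⟨j, hjn⟩ := Fin.ext (by simp [hxy]; omega)
      rw [hx, hy]; exact h2
    · exact h1 x y hxy hj

lemma gf_split (P Q : Equiv.Perm (Fin n) → Prop) (h : ∀ σ, Q σ → P σ) :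
    gfA n P = gfA n Q + ∑ σ : Equiv.Perm (Fin n),
      if P σ ∧ ¬ Q σ then (-1 : Polynomial ℤ) ^ (ellA n σ) * X ^ (oddLA n σ) else 0 := by
  rw [gfA, gfA, ← Finset.sum_add_distrib]
  apply Finset.sum_congr rfl
  intro σ _
  by_cases hq : Q σ
  · simp [hq, h σ hq]
  · by_cases hp : P σ <;> simp [hp, hq]

set_option maxHeartbeats 1000000 in
lemma vanish_left (I : Finset ℕ) (i k : ℕ) (hi : 1 ≤ i)
    (hn : i + 2*k + 2 ≤ n)
    (hwin : ∀ j : ℕ, i + 1 ≤ j → j ≤ i + 2*k + 1 → j ∈ I)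
    (hleft : i ∉ I) (hleft2 : i - 1 ∉ I) (hright : i + 2*k + 2 ∉ I) :
    ∑ σ : Equiv.Perm (Fin n),
      (if inQuotA n I σ ∧ ¬ inQuotA n (insert i I) σ
        then (-1 : Polynomial ℤ) ^ (ellA n σ) * X ^ (oddLA n σ) else 0) = 0 := by
  classical
  set S : Fin n := ⟨i - 1, by omega⟩ with hS
  set P0 : Fin n := ⟨i, by omega⟩ with hP0
  have hSv : (S:ℕ) = i - 1 := rfl
  have hP0v : (P0:ℕ) = i := rfl
  -- descent characterization
  have hDes : ∀ σ : Equiv.Perm (Fin n),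
      (inQuotA n I σ ∧ ¬ inQuotA n (insert i I) σ) ↔ (inQuotA n I σ ∧ σ P0 < σ S) := by
    intro σ
    constructor
    · rintro ⟨h1, h2⟩
      refine ⟨h1, ?_⟩
      rw [inQuot_insert I σ i hi (by omega)] at h2
      push_neg at h2
      have h3 : σ P0 ≤ σ S := h2 h1
      have h4 : σ S ≠ σ P0 := fun hc => by
        have h5 : S = P0 := σ.injective hc
        have h6 := Fin.val_eq_of_eq h5
        rw [hSv, hP0v] at h6
        omega
      exact lt_of_le_of_ne h3 (fun hc => h4 hc.symm)
    · rintro ⟨h1, h2⟩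
      refine ⟨h1, ?_⟩
      rw [inQuot_insert I σ i hi (by omega)]
      rintro ⟨-, hc⟩
      have hc' : σ S < σ P0 := hc
      exact absurd (hc'.trans h2) (lt_irrefl _)
  -- the rank function
  set m : Equiv.Perm (Fin n) → ℕ := fun σ =>
    (Finset.univ.filter (fun z : Fin n => i ≤ (z:ℕ) ∧ (z:ℕ) ≤ i + (2*k+1) ∧ σ z < σ S)).card
    with hm
  have hmdef : ∀ ρ : Equiv.Perm (Fin n), m ρ =
      (Finset.univ.filter (fun z : Fin n => i ≤ (z:ℕ) ∧ (z:ℕ) ≤ i + (2*k+1) ∧ ρ z < ρ S)).card :=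
    fun _ => rfl
  have hmBound : ∀ σ, m σ ≤ 2*k + 2 := by
    intro σ
    have hsub : (Finset.univ.filter (fun z : Fin n => i ≤ (z:ℕ) ∧ (z:ℕ) ≤ i + (2*k+1) ∧ σ z < σ S))
        ⊆ (Finset.univ.filter (fun z : Fin n => i ≤ (z:ℕ) ∧ (z:ℕ) < i + (2*k+2))) := by
      intro z hz
      simp only [Finset.mem_filter] at hz ⊢
      exact ⟨hz.1, hz.2.1, by omega⟩
    have h0 := Finset.card_le_card hsub
    rw [cardFilterIco i (2*k+2) (by omega)] at h0
    rw [hmdef σ]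
    exact h0
  set t : Equiv.Perm (Fin n) → ℕ := fun σ => (m σ + 1) / 2 with ht
  have htdef : ∀ ρ, t ρ = (m ρ + 1) / 2 := fun _ => rfl
  set C : Equiv.Perm (Fin n) → Fin n :=
    fun σ => ⟨min (i - 1 + 2 * t σ) (i + 2*k + 1), by omega⟩ with hC
  have hCdef : ∀ ρ, ((C ρ):ℕ) = min (i - 1 + 2 * t ρ) (i + 2*k + 1) := fun _ => rfl
  obtain ⟨g, hg⟩ : ∃ g : Equiv.Perm (Fin n) → Equiv.Perm (Fin n),
      ∀ σ, g σ = if (inQuotA n I σ ∧ σ P0 < σ S) then σ * Equiv.swap S (C σ) else σ :=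
    ⟨_, fun _ => rfl⟩
  -- main facts
  have main : ∀ σ : Equiv.Perm (Fin n), (inQuotA n I σ ∧ σ P0 < σ S) →
      (inQuotA n I (σ * Equiv.swap S (C σ)) ∧
        (σ * Equiv.swap S (C σ)) P0 < (σ * Equiv.swap S (C σ)) S) ∧
      C (σ * Equiv.swap S (C σ)) = C σ ∧
      oddLA n (σ * Equiv.swap S (C σ)) = oddLA n σ ∧
      (-1 : Polynomial ℤ) ^ (ellA n (σ * Equiv.swap S (C σ)))
        = -(-1 : Polynomial ℤ) ^ (ellA n σ) ∧
      S < C σ := by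
    intro σ hDσ
    obtain ⟨hQ, hdes⟩ := hDσ
    have hmono : ∀ x y : Fin n, i ≤ (x:ℕ) → (y:ℕ) ≤ i + (2*k+1) → x < y → σ x < σ y :=
      quotMono I σ hQ i (2*k+1) (fun j h1 h2 => hwin j (by omega) (by omega)) (by omega)
    have hchar0 := initSeg σ i (2*k+1) S (by rw [hSv]; omega) (by omega) hmono
    have hchar : ∀ x : Fin n, i ≤ (x:ℕ) → (x:ℕ) ≤ i + (2*k+1) →
        (σ x < σ S ↔ (x:ℕ) < i + m σ) := by
      intro x h1 h2
      rw [hmdef σ]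
      exact hchar0 x h1 h2
    have hm1 : 1 ≤ m σ := by
      have h0 := (hchar P0 (by rw [hP0v]) (by rw [hP0v]; omega)).1 hdes
      rw [hP0v] at h0
      omega
    have hmB := hmBound σ
    have hTdef : t σ = (m σ + 1) / 2 := htdef σ
    have hT1 : 1 ≤ t σ := by omega
    have hTk : t σ ≤ k + 1 := by omega
    have hMT : m σ = 2*(t σ) - 1 ∨ m σ = 2*(t σ) := by omega
    have hCval : ((C σ):ℕ) = i - 1 + 2*(t σ) := by rw [hCdef σ]; omega
    have hSC : S < C σ := by
      rw [Fin.lt_def, hCval, hSv]; omega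
    have hpar : (S:ℕ) % 2 = ((C σ):ℕ) % 2 := by
      rw [hCval, hSv]; omega
    have hCwin1 : i ≤ ((C σ):ℕ) := by omega
    have hCwin2 : ((C σ):ℕ) ≤ i + (2*k+1) := by omega
    obtain ⟨τ, hτ⟩ : ∃ τ, τ = σ * Equiv.swap S (C σ) := ⟨_, rfl⟩
    rw [← hτ]
    have hτap : ∀ x, τ x = σ (Equiv.swap S (C σ) x) := by
      rw [hτ]; exact fun x => Equiv.Perm.mul_apply σ _ x
    have hτS : τ S = σ (C σ) := by rw [hτap, Equiv.swap_apply_left]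
    have hτC : τ (C σ) = σ S := by rw [hτap, Equiv.swap_apply_right]
    have hτelse : ∀ x : Fin n, x ≠ S → x ≠ C σ → τ x = σ x := by
      intro x h1 h2; rw [hτap, Equiv.swap_apply_of_ne_of_ne h1 h2]
    -- between condition
    have hbet : ∀ r : Fin n, S < r → r < C σ → (σ r < σ S ↔ σ r < σ (C σ)) := by
      intro r h1 h2
      rw [Fin.lt_def, hSv] at h1
      rw [Fin.lt_def, hCval] at h2
      have hr1 : i ≤ (r:ℕ) := by omega
      have hr2 : (r:ℕ) ≤ i + (2*k+1) := by omega
      have hA : σ r < σ S := by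
        rw [hchar r hr1 hr2]
        omega
      have hB : σ r < σ (C σ) := hmono r (C σ) hr1 hCwin2 (by rw [Fin.lt_def, hCval]; omega)
      exact iff_of_true hA hB
    obtain ⟨hodd, hsign⟩ := swap_core σ S (C σ) hSC hpar hbet
    rw [← hτ] at hodd hsign
    -- τ is in the quotient
    have hQτ : inQuotA n I τ := by
      intro x y hxy hmem
      have hjne1 : (x:ℕ) + 1 ≠ i := fun hc => hleft (hc ▸ hmem)
      have hjne2 : (x:ℕ) + 1 ≠ i - 1 := fun hc => hleft2 (hc ▸ hmem)
      have hjne3 : (x:ℕ) + 1 ≠ i + 2*k + 2 := fun hc => hright (hc ▸ hmem)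
      have hxS : x ≠ S := fun hc => by
        have h0 := Fin.val_eq_of_eq hc; rw [hSv] at h0; omega
      have hyS : y ≠ S := fun hc => by
        have h0 := Fin.val_eq_of_eq hc; rw [hSv] at h0; omega
      by_cases hxC : x = C σ
      · have hxval : (x:ℕ) = i - 1 + 2*(t σ) := by rw [hxC, hCval]
        have hyC : y ≠ C σ := fun hc => by
          have h0 := Fin.val_eq_of_eq hc; rw [hCval] at h0; omega
        rw [hxC, hτC, hτelse y hyS hyC]
        have hjI : (x:ℕ) + 1 ≤ i + 2*k + 1 := by omega
        have hy1 : i ≤ (y:ℕ) := by omega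
        have hy2 : (y:ℕ) ≤ i + (2*k+1) := by omega
        have hnotlt : ¬ σ y < σ S := by
          rw [hchar y hy1 hy2]
          omega
        have hne : σ y ≠ σ S := fun hc => hyS (σ.injective hc)
        exact lt_of_le_of_ne (not_lt.1 hnotlt) (Ne.symm hne)
      · by_cases hyC : y = C σ
        · rw [hyC, hτC, hτelse x hxS hxC]
          have hxval : (x:ℕ) = i - 1 + 2*(t σ) - 1 := by
            have h7 := Fin.val_eq_of_eq hyC
            rw [hCval] at h7
            omega
          have hx1 : i ≤ (x:ℕ) := by omega
          have hx2 : (x:ℕ) ≤ i + (2*k+1) := by omega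
          rw [hchar x hx1 hx2]
          omega
        · rw [hτelse x hxS hxC, hτelse y hyS hyC]
          exact hQ x y hxy hmem
    have hdesτ : τ P0 < τ S := by
      have hP0S : P0 ≠ S := fun hc => by
        have h0 := Fin.val_eq_of_eq hc; rw [hP0v, hSv] at h0; omega
      have hP0C : P0 ≠ C σ := fun hc => by
        have h0 := Fin.val_eq_of_eq hc; rw [hP0v, hCval] at h0; omega
      rw [hτS, hτelse P0 hP0S hP0C]
      exact hmono P0 (C σ) (by rw [hP0v]) hCwin2 (by rw [Fin.lt_def, hP0v, hCval]; omega)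
    -- compute m τ
    have hmτ : m τ = (if m σ = 2*(t σ) then 2*(t σ) - 1 else 2*(t σ)) := by
      obtain ⟨M'', hM''⟩ : ∃ M'', M'' = (if m σ = 2*(t σ) then 2*(t σ) - 1 else 2*(t σ)) :=
        ⟨_, rfl⟩
      rw [← hM'']
      have hM''le : M'' ≤ 2*k + 2 := by rw [hM'']; split <;> omega
      have hpoint : ∀ z : Fin n,
          (i ≤ (z:ℕ) ∧ (z:ℕ) ≤ i + (2*k+1) ∧ τ z < τ S) ↔ (i ≤ (z:ℕ) ∧ (z:ℕ) < i + M'') := by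
        intro z
        constructor
        · rintro ⟨h1, h2, h3⟩
          refine ⟨h1, ?_⟩
          rw [hτS] at h3
          by_cases hzC : z = C σ
          · rw [hzC, hτC] at h3
            have hltC : ¬ (σ (C σ) < σ S) := fun hc => absurd (h3.trans hc) (lt_irrefl _)
            rw [hchar (C σ) hCwin1 hCwin2, hCval] at hltC
            have hMeq : m σ = 2*(t σ) - 1 := by omega
            have hM2 : M'' = 2*(t σ) := by rw [hM'', if_neg (by omega)]
            have hzval := Fin.val_eq_of_eq hzC
            rw [hCval] at hzval
            omega
          · have hzS : z ≠ S := fun hc => by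
              have h0 := Fin.val_eq_of_eq hc; rw [hSv] at h0; omega
            rw [hτelse z hzS hzC] at h3
            have hzlt : (z:ℕ) < (C σ:ℕ) := by
              by_contra hc
              rcases lt_or_eq_of_le (not_lt.1 hc) with h4 | h4
              · exact absurd ((hmono (C σ) z hCwin1 h2 (by rw [Fin.lt_def]; omega)).trans h3)
                  (lt_irrefl _)
              · exact hzC (Fin.ext h4.symm)
            rw [hCval] at hzlt
            rw [hM'']
            split <;> omega
        · rintro ⟨h1, h2⟩
          have h2' : (z:ℕ) ≤ i + (2*k+1) := by omega
          refine ⟨h1, h2', ?_⟩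
          rw [hτS]
          by_cases hzC : z = C σ
          · rw [hzC, hτC]
            have hzval := Fin.val_eq_of_eq hzC
            rw [hCval] at hzval
            have hMeq : m σ = 2*(t σ) - 1 := by
              rcases hMT with h5 | h5
              · exact h5
              · exfalso
                have : M'' = 2*(t σ) - 1 := by rw [hM'', if_pos h5]
                omega
            have hnlt : ¬ σ (C σ) < σ S := by
              rw [hchar (C σ) hCwin1 hCwin2, hCval]; omega
            have hne : σ S ≠ σ (C σ) := fun hc => (ne_of_lt hSC) (σ.injective hc)
            exact lt_of_le_of_ne (not_lt.1 hnlt) hne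
          · have hzS : z ≠ S := fun hc => by
              have h0 := Fin.val_eq_of_eq hc; rw [hSv] at h0; omega
            rw [hτelse z hzS hzC]
            apply hmono z (C σ) h1 hCwin2
            rw [Fin.lt_def, hCval]
            have hzne : (z:ℕ) ≠ i - 1 + 2*(t σ) := fun hc => hzC (Fin.ext (by rw [hCval]; exact hc))
            rcases hMT with h5 | h5
            · have : M'' = 2*(t σ) := by rw [hM'', if_neg (by omega)]
              omega
            · have : M'' = 2*(t σ) - 1 := by rw [hM'', if_pos h5]
              omega
      have hfeq : (Finset.univ.filter (fun z : Fin n => i ≤ (z:ℕ) ∧ (z:ℕ) ≤ i + (2*k+1) ∧ τ z < τ S))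
          = (Finset.univ.filter (fun z : Fin n => i ≤ (z:ℕ) ∧ (z:ℕ) < i + M'')) := by
        apply Finset.filter_congr
        intro z _
        exact hpoint z
      rw [hmdef τ, hfeq, cardFilterIco i M'' (by omega)]
    have hCτ : C τ = C σ := by
      have hTτ : t τ = t σ := by
        have h0 : t τ = (m τ + 1)/2 := htdef τ
        rw [hmτ] at h0
        rcases hMT with h5 | h5
        · rw [if_neg (by omega)] at h0; omega
        · rw [if_pos h5] at h0; omega
      apply Fin.ext
      rw [hCdef, hCdef, hTτ]
    exact ⟨⟨hQτ, hdesτ⟩, hCτ, hodd, hsign, hSC⟩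
  -- rewrite the sum using the descent characterization
  have hsum : ∑ σ : Equiv.Perm (Fin n),
      (if inQuotA n I σ ∧ ¬ inQuotA n (insert i I) σ
        then (-1 : Polynomial ℤ) ^ (ellA n σ) * X ^ (oddLA n σ) else 0)
      = ∑ σ : Equiv.Perm (Fin n),
      (if (inQuotA n I σ ∧ σ P0 < σ S)
        then (-1 : Polynomial ℤ) ^ (ellA n σ) * X ^ (oddLA n σ) else 0) := by
    apply Finset.sum_congr rfl
    intro σ _
    by_cases hd : inQuotA n I σ ∧ ¬ inQuotA n (insert i I) σ
    · rw [if_pos hd, if_pos ((hDes σ).1 hd)]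
    · rw [if_neg hd, if_neg (fun hc => hd ((hDes σ).2 hc))]
  rw [hsum]
  apply Finset.sum_ninvolution g
  · intro σ
    by_cases hDσ : inQuotA n I σ ∧ σ P0 < σ S
    · obtain ⟨hDτ, -, hodd, hsign, -⟩ := main σ hDσ
      rw [hg σ, if_pos hDσ, if_pos hDσ, if_pos hDτ, hodd, hsign]
      ring
    · simp only [hg σ, if_neg hDσ, add_zero]
  · intro σ hne0
    have hDσ : inQuotA n I σ ∧ σ P0 < σ S := by
      by_contra hc
      exact hne0 (by rw [if_neg hc])
    obtain ⟨-, -, -, -, hSC⟩ := main σ hDσ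
    rw [hg σ, if_pos hDσ]
    intro hc
    have h8 : σ (C σ) = σ S := by
      conv_rhs => rw [← hc]
      rw [Equiv.Perm.mul_apply, Equiv.swap_apply_left]
    have h9 : C σ = S := σ.injective h8
    exact absurd h9 (ne_of_gt hSC)
  · intro σ; exact Finset.mem_univ _
  · intro σ
    by_cases hDσ : inQuotA n I σ ∧ σ P0 < σ S
    · obtain ⟨hDτ, hCτ, -, -, -⟩ := main σ hDσ
      rw [hg σ, if_pos hDσ, hg _, if_pos hDτ, hCτ,
        mul_assoc, Equiv.swap_mul_self, mul_one]
    · rw [hg σ, if_neg hDσ, hg σ, if_neg hDσ]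

set_option maxHeartbeats 1000000 in
lemma vanish_right (J : Finset ℕ) (i k : ℕ) (hi : 1 ≤ i)
    (hn : i + 2*k + 2 ≤ n)
    (hwin : ∀ j : ℕ, i ≤ j → j ≤ i + 2*k → j ∈ J)
    (hnot1 : i - 1 ∉ J) (hnot2 : i + 2*k + 1 ∉ J) (hnot3 : i + 2*k + 2 ∉ J) :
    ∑ σ : Equiv.Perm (Fin n),
      (if inQuotA n J σ ∧ ¬ inQuotA n (insert (i + 2*k + 1) J) σ
        then (-1 : Polynomial ℤ) ^ (ellA n σ) * X ^ (oddLA n σ) else 0) = 0 := by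
  classical
  set S : Fin n := ⟨i + 2*k + 1, by omega⟩ with hS
  set E : Fin n := ⟨i + 2*k, by omega⟩ with hE
  have hSv : (S:ℕ) = i + 2*k + 1 := rfl
  have hEv : (E:ℕ) = i + 2*k := rfl
  -- descent characterization
  have hDes : ∀ σ : Equiv.Perm (Fin n),
      (inQuotA n J σ ∧ ¬ inQuotA n (insert (i + 2*k + 1) J) σ) ↔
        (inQuotA n J σ ∧ σ S < σ E) := by
    intro σ
    constructor
    · rintro ⟨h1, h2⟩
      refine ⟨h1, ?_⟩
      rw [inQuot_insert J σ (i + 2*k + 1) (by omega) (by omega)] at h2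
      push_neg at h2
      have h3 : σ S ≤ σ E := h2 h1
      have h4 : σ E ≠ σ S := fun hc => by
        have h5 := Fin.val_eq_of_eq (σ.injective hc)
        rw [hSv, hEv] at h5
        omega
      exact lt_of_le_of_ne h3 (fun hc => h4 hc.symm)
    · rintro ⟨h1, h2⟩
      refine ⟨h1, ?_⟩
      rw [inQuot_insert J σ (i + 2*k + 1) (by omega) (by omega)]
      rintro ⟨-, hc⟩
      have hc' : σ E < σ S := hc
      exact absurd (hc'.trans h2) (lt_irrefl _)
  -- the rank function
  set m : Equiv.Perm (Fin n) → ℕ := fun σ =>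
    (Finset.univ.filter (fun z : Fin n => i - 1 ≤ (z:ℕ) ∧ (z:ℕ) ≤ (i-1) + (2*k+1) ∧ σ z < σ S)).card
    with hm
  have hmdef : ∀ ρ : Equiv.Perm (Fin n), m ρ =
      (Finset.univ.filter
        (fun z : Fin n => i - 1 ≤ (z:ℕ) ∧ (z:ℕ) ≤ (i-1) + (2*k+1) ∧ ρ z < ρ S)).card :=
    fun _ => rfl
  have hmBound : ∀ σ, m σ ≤ 2*k + 2 := by
    intro σ
    have hsub : (Finset.univ.filter
        (fun z : Fin n => i - 1 ≤ (z:ℕ) ∧ (z:ℕ) ≤ (i-1) + (2*k+1) ∧ σ z < σ S))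
        ⊆ (Finset.univ.filter (fun z : Fin n => i - 1 ≤ (z:ℕ) ∧ (z:ℕ) < (i-1) + (2*k+2))) := by
      intro z hz
      simp only [Finset.mem_filter] at hz ⊢
      exact ⟨hz.1, hz.2.1, by omega⟩
    have h0 := Finset.card_le_card hsub
    rw [cardFilterIco (i-1) (2*k+2) (by omega)] at h0
    rw [hmdef σ]
    exact h0
  set t : Equiv.Perm (Fin n) → ℕ := fun σ => m σ / 2 with ht
  have htdef : ∀ ρ, t ρ = m ρ / 2 := fun _ => rfl
  set C : Equiv.Perm (Fin n) → Fin n :=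
    fun σ => ⟨min (i - 1 + 2 * t σ) (i + 2*k), by omega⟩ with hC
  have hCdef : ∀ ρ, ((C ρ):ℕ) = min (i - 1 + 2 * t ρ) (i + 2*k) := fun _ => rfl
  obtain ⟨g, hg⟩ : ∃ g : Equiv.Perm (Fin n) → Equiv.Perm (Fin n),
      ∀ σ, g σ = if (inQuotA n J σ ∧ σ S < σ E) then σ * Equiv.swap (C σ) S else σ :=
    ⟨_, fun _ => rfl⟩
  -- main facts
  have main : ∀ σ : Equiv.Perm (Fin n), (inQuotA n J σ ∧ σ S < σ E) →
      (inQuotA n J (σ * Equiv.swap (C σ) S) ∧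
        (σ * Equiv.swap (C σ) S) S < (σ * Equiv.swap (C σ) S) E) ∧
      C (σ * Equiv.swap (C σ) S) = C σ ∧
      oddLA n (σ * Equiv.swap (C σ) S) = oddLA n σ ∧
      (-1 : Polynomial ℤ) ^ (ellA n (σ * Equiv.swap (C σ) S))
        = -(-1 : Polynomial ℤ) ^ (ellA n σ) ∧
      C σ < S := by
    intro σ hDσ
    obtain ⟨hQ, hdes⟩ := hDσ
    have hmono : ∀ x y : Fin n, i - 1 ≤ (x:ℕ) → (y:ℕ) ≤ (i-1) + (2*k+1) → x < y → σ x < σ y :=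
      quotMono J σ hQ (i-1) (2*k+1) (fun j h1 h2 => hwin j (by omega) (by omega)) (by omega)
    have hchar0 := initSeg σ (i-1) (2*k+1) S (by rw [hSv]; omega) (by omega) hmono
    have hchar : ∀ x : Fin n, i - 1 ≤ (x:ℕ) → (x:ℕ) ≤ (i-1) + (2*k+1) →
        (σ x < σ S ↔ (x:ℕ) < (i-1) + m σ) := by
      intro x h1 h2
      rw [hmdef σ]
      exact hchar0 x h1 h2
    have hmB := hmBound σ
    have hm0 : m σ ≤ 2*k + 1 := by
      have h0 : ¬ σ E < σ S := fun hc => absurd (hc.trans hdes) (lt_irrefl _)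
      rw [hchar E (by rw [hEv]; omega) (by rw [hEv]; omega), hEv] at h0
      omega
    have hTdef : t σ = m σ / 2 := htdef σ
    have hTk : t σ ≤ k := by omega
    have hMT : m σ = 2*(t σ) ∨ m σ = 2*(t σ) + 1 := by omega
    have hCval : ((C σ):ℕ) = i - 1 + 2*(t σ) := by rw [hCdef σ]; omega
    have hCS : C σ < S := by
      rw [Fin.lt_def, hCval, hSv]; omega
    have hpar : ((C σ):ℕ) % 2 = (S:ℕ) % 2 := by
      rw [hCval, hSv]; omega
    have hCwin1 : i - 1 ≤ ((C σ):ℕ) := by omega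
    have hCwin2 : ((C σ):ℕ) ≤ (i-1) + (2*k+1) := by omega
    have hCwin2' : ((C σ):ℕ) ≤ i + 2*k := by omega
    obtain ⟨τ, hτ⟩ : ∃ τ, τ = σ * Equiv.swap (C σ) S := ⟨_, rfl⟩
    rw [← hτ]
    have hτap : ∀ x, τ x = σ (Equiv.swap (C σ) S x) := by
      rw [hτ]; exact fun x => Equiv.Perm.mul_apply σ _ x
    have hτC : τ (C σ) = σ S := by rw [hτap, Equiv.swap_apply_left]
    have hτS : τ S = σ (C σ) := by rw [hτap, Equiv.swap_apply_right]
    have hτelse : ∀ x : Fin n, x ≠ C σ → x ≠ S → τ x = σ x := by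
      intro x h1 h2; rw [hτap, Equiv.swap_apply_of_ne_of_ne h1 h2]
    -- between condition
    have hbet : ∀ r : Fin n, C σ < r → r < S → (σ r < σ (C σ) ↔ σ r < σ S) := by
      intro r h1 h2
      rw [Fin.lt_def, hCval] at h1
      rw [Fin.lt_def, hSv] at h2
      have hr1 : i - 1 ≤ (r:ℕ) := by omega
      have hr2 : (r:ℕ) ≤ (i-1) + (2*k+1) := by omega
      have hA : ¬ σ r < σ (C σ) := by
        intro hc
        exact absurd ((hmono (C σ) r hCwin1 hr2 (by rw [Fin.lt_def, hCval]; omega)).trans hc)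
          (lt_irrefl _)
      have hB : ¬ σ r < σ S := by
        rw [hchar r hr1 hr2]
        omega
      exact iff_of_false hA hB
    obtain ⟨hodd, hsign⟩ := swap_core σ (C σ) S hCS hpar hbet
    rw [← hτ] at hodd hsign
    -- τ is in the quotient
    have hQτ : inQuotA n J τ := by
      intro x y hxy hmem
      have hjne1 : (x:ℕ) + 1 ≠ i - 1 := fun hc => hnot1 (hc ▸ hmem)
      have hjne2 : (x:ℕ) + 1 ≠ i + 2*k + 1 := fun hc => hnot2 (hc ▸ hmem)
      have hjne3 : (x:ℕ) + 1 ≠ i + 2*k + 2 := fun hc => hnot3 (hc ▸ hmem)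
      have hxS : x ≠ S := fun hc => by
        have h0 := Fin.val_eq_of_eq hc; rw [hSv] at h0; omega
      have hyS : y ≠ S := fun hc => by
        have h0 := Fin.val_eq_of_eq hc; rw [hSv] at h0; omega
      by_cases hxC : x = C σ
      · have hxval : (x:ℕ) = i - 1 + 2*(t σ) := by rw [hxC, hCval]
        have hyC : y ≠ C σ := fun hc => by
          have h0 := Fin.val_eq_of_eq hc; rw [hCval] at h0; omega
        rw [hxC, hτC, hτelse y hyC hyS]
        have hy1 : i - 1 ≤ (y:ℕ) := by omega
        have hy2 : (y:ℕ) ≤ (i-1) + (2*k+1) := by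
          have h0 := Fin.val_eq_of_eq (rfl : y = y)
          -- y = x + 1 = i + 2t ≤ i + 2k
          omega
        have hnotlt : ¬ σ y < σ S := by
          rw [hchar y hy1 hy2]
          omega
        have hne : σ y ≠ σ S := fun hc => hyS (σ.injective hc)
        exact lt_of_le_of_ne (not_lt.1 hnotlt) (Ne.symm hne)
      · by_cases hyC : y = C σ
        · rw [hyC, hτC, hτelse x hxC hxS]
          have hyval : (y:ℕ) = i - 1 + 2*(t σ) := by rw [hyC, hCval]
          -- if t σ = 0 then the constraint index would be i - 1, impossible
          have ht1 : 1 ≤ t σ := by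
            by_contra hc
            have : (x:ℕ) + 1 = i - 1 := by omega
            exact hjne1 this
          have hx1 : i - 1 ≤ (x:ℕ) := by omega
          have hx2 : (x:ℕ) ≤ (i-1) + (2*k+1) := by omega
          rw [hchar x hx1 hx2]
          omega
        · rw [hτelse x hxC hxS, hτelse y hyC hyS]
          exact hQ x y hxy hmem
    have hdesτ : τ S < τ E := by
      have hES : E ≠ S := fun hc => by
        have h0 := Fin.val_eq_of_eq hc; rw [hSv, hEv] at h0; omega
      have hEC : E ≠ C σ := fun hc => by
        have h0 := Fin.val_eq_of_eq hc; rw [hEv, hCval] at h0; omega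
      rw [hτS, hτelse E hEC hES]
      exact hmono (C σ) E hCwin1 (by rw [hEv]; omega) (by rw [Fin.lt_def, hEv, hCval]; omega)
    -- compute m τ
    have hmτ : m τ = (if m σ = 2*(t σ) then 2*(t σ) + 1 else 2*(t σ)) := by
      obtain ⟨M'', hM''⟩ : ∃ M'', M'' = (if m σ = 2*(t σ) then 2*(t σ) + 1 else 2*(t σ)) :=
        ⟨_, rfl⟩
      rw [← hM'']
      have hM''le : M'' ≤ 2*k + 2 := by rw [hM'']; split <;> omega
      have hpoint : ∀ z : Fin n,
          (i - 1 ≤ (z:ℕ) ∧ (z:ℕ) ≤ (i-1) + (2*k+1) ∧ τ z < τ S) ↔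
            (i - 1 ≤ (z:ℕ) ∧ (z:ℕ) < (i-1) + M'') := by
        intro z
        constructor
        · rintro ⟨h1, h2, h3⟩
          refine ⟨h1, ?_⟩
          rw [hτS] at h3
          by_cases hzC : z = C σ
          · rw [hzC, hτC] at h3
            -- σ S < σ C, so m σ = 2t, M'' = 2t+1
            have hltC : ¬ (σ (C σ) < σ S) := fun hc => absurd (h3.trans hc) (lt_irrefl _)
            rw [hchar (C σ) hCwin1 hCwin2, hCval] at hltC
            have hzval := Fin.val_eq_of_eq hzC
            rw [hCval] at hzval
            have hM2 : M'' = 2*(t σ) + 1 := by rw [hM'', if_pos (by omega)]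
            omega
          · have hzS : z ≠ S := fun hc => by
              have h0 := Fin.val_eq_of_eq hc; rw [hSv] at h0; omega
            rw [hτelse z hzC hzS] at h3
            have hzlt : (z:ℕ) < (C σ:ℕ) := by
              by_contra hc
              rcases lt_or_eq_of_le (not_lt.1 hc) with h4 | h4
              · exact absurd ((hmono (C σ) z hCwin1 h2 (by rw [Fin.lt_def]; omega)).trans h3)
                  (lt_irrefl _)
              · exact hzC (Fin.ext h4.symm)
            rw [hCval] at hzlt
            rw [hM'']
            split <;> omega
        · rintro ⟨h1, h2⟩
          have h2' : (z:ℕ) ≤ (i-1) + (2*k+1) := by omega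
          refine ⟨h1, h2', ?_⟩
          rw [hτS]
          by_cases hzC : z = C σ
          · rw [hzC, hτC]
            have hzval := Fin.val_eq_of_eq hzC
            rw [hCval] at hzval
            have hMeq : m σ = 2*(t σ) := by
              rcases hMT with h5 | h5
              · exact h5
              · exfalso
                have : M'' = 2*(t σ) := by rw [hM'', if_neg (by omega)]
                omega
            have hnlt : ¬ σ (C σ) < σ S := by
              rw [hchar (C σ) hCwin1 hCwin2, hCval]; omega
            have hne : σ S ≠ σ (C σ) := fun hc => (ne_of_gt hCS) (σ.injective hc)
            exact lt_of_le_of_ne (not_lt.1 hnlt) hne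
          · have hzS : z ≠ S := fun hc => by
              have h0 := Fin.val_eq_of_eq hc; rw [hSv] at h0; omega
            rw [hτelse z hzC hzS]
            apply hmono z (C σ) h1 hCwin2
            rw [Fin.lt_def, hCval]
            have hzne : (z:ℕ) ≠ i - 1 + 2*(t σ) := fun hc => hzC (Fin.ext (by rw [hCval]; exact hc))
            rcases hMT with h5 | h5
            · have : M'' = 2*(t σ) + 1 := by rw [hM'', if_pos h5]
              omega
            · have : M'' = 2*(t σ) := by rw [hM'', if_neg (by omega)]
              omega
      have hfeq : (Finset.univ.filter
            (fun z : Fin n => i - 1 ≤ (z:ℕ) ∧ (z:ℕ) ≤ (i-1) + (2*k+1) ∧ τ z < τ S))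
          = (Finset.univ.filter (fun z : Fin n => i - 1 ≤ (z:ℕ) ∧ (z:ℕ) < (i-1) + M'')) := by
        apply Finset.filter_congr
        intro z _
        exact hpoint z
      rw [hmdef τ, hfeq, cardFilterIco (i-1) M'' (by omega)]
    have hCτ : C τ = C σ := by
      have hTτ : t τ = t σ := by
        have h0 : t τ = m τ / 2 := htdef τ
        rw [hmτ] at h0
        rcases hMT with h5 | h5
        · rw [if_pos h5] at h0; omega
        · rw [if_neg (by omega)] at h0; omega
      apply Fin.ext
      rw [hCdef, hCdef, hTτ]
    exact ⟨⟨hQτ, hdesτ⟩, hCτ, hodd, hsign, hCS⟩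
  -- rewrite the sum using the descent characterization
  have hsum : ∑ σ : Equiv.Perm (Fin n),
      (if inQuotA n J σ ∧ ¬ inQuotA n (insert (i + 2*k + 1) J) σ
        then (-1 : Polynomial ℤ) ^ (ellA n σ) * X ^ (oddLA n σ) else 0)
      = ∑ σ : Equiv.Perm (Fin n),
      (if (inQuotA n J σ ∧ σ S < σ E)
        then (-1 : Polynomial ℤ) ^ (ellA n σ) * X ^ (oddLA n σ) else 0) := by
    apply Finset.sum_congr rfl
    intro σ _
    by_cases hd : inQuotA n J σ ∧ ¬ inQuotA n (insert (i + 2*k + 1) J) σ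
    · rw [if_pos hd, if_pos ((hDes σ).1 hd)]
    · rw [if_neg hd, if_neg (fun hc => hd ((hDes σ).2 hc))]
  rw [hsum]
  apply Finset.sum_ninvolution g
  · intro σ
    by_cases hDσ : inQuotA n J σ ∧ σ S < σ E
    · obtain ⟨hDτ, -, hodd, hsign, -⟩ := main σ hDσ
      rw [hg σ, if_pos hDσ, if_pos hDσ, if_pos hDτ, hodd, hsign]
      ring
    · simp only [hg σ, if_neg hDσ, add_zero]
  · intro σ hne0
    have hDσ : inQuotA n J σ ∧ σ S < σ E := by
      by_contra hc
      exact hne0 (by rw [if_neg hc])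
    obtain ⟨-, -, -, -, hCS⟩ := main σ hDσ
    rw [hg σ, if_pos hDσ]
    intro hc
    have h8 : (σ * Equiv.swap (C σ) S) (C σ) = σ (C σ) := by rw [hc]
    rw [Equiv.Perm.mul_apply, Equiv.swap_apply_left] at h8
    have h9 : S = C σ := σ.injective h8
    exact absurd h9.symm (ne_of_lt hCS)
  · intro σ; exact Finset.mem_univ _
  · intro σ
    by_cases hDσ : inQuotA n J σ ∧ σ S < σ E
    · obtain ⟨hDτ, hCτ, -, -, -⟩ := main σ hDσ
      rw [hg σ, if_pos hDσ, hg _, if_pos hDτ, hCτ,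
        mul_assoc, Equiv.swap_mul_self, mul_one]
    · rw [hg σ, if_neg hDσ, hg σ, if_neg hDσ]

lemma gf_split' (J1 J2 : Finset ℕ) (h : ∀ σ : Equiv.Perm (Fin n), inQuotA n J2 σ → inQuotA n J1 σ) :
    gfA n (fun σ => inQuotA n J1 σ) = gfA n (fun σ => inQuotA n J2 σ) +
      ∑ σ : Equiv.Perm (Fin n),
        if inQuotA n J1 σ ∧ ¬ inQuotA n J2 σ
          then (-1 : Polynomial ℤ) ^ (ellA n σ) * X ^ (oddLA n σ) else 0 := by
  rw [gfA, gfA, ← Finset.sum_add_distrib]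
  apply Finset.sum_congr rfl
  intro σ _
  by_cases hq : inQuotA n J2 σ
  · simp [hq, h σ hq]
  · by_cases hp : inQuotA n J1 σ <;> simp [hp, hq]


/-- Proposition 3.4. If `[i+1, i+2k+1]` is a connected component of
`I ⊆ [n-1]` and `i-1 ∉ I`, then with `Ī := (I \ {i+2k+1}) ∪ {i}` the signed generating
functions over `S_n^I`, `S_n^{I ∪ Ī}` and `S_n^{Ī}` coincide. -/
theorem statement6 (n : ℕ) (I : Finset ℕ) (hI : I ⊆ Finset.Icc 1 (n - 1))
    (i k : ℕ) (hi : 1 ≤ i)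
    (hsub : Finset.Icc (i + 1) (i + 2 * k + 1) ⊆ I)
    (hleft : i ∉ I) (hright : i + 2 * k + 2 ∉ I) (hleft2 : i - 1 ∉ I) :
    gfA n (fun σ => inQuotA n I σ) =
        gfA n (fun σ => inQuotA n (I ∪ insert i (I.erase (i + 2 * k + 1))) σ) ∧
    gfA n (fun σ => inQuotA n I σ) =
        gfA n (fun σ => inQuotA n (insert i (I.erase (i + 2 * k + 1))) σ) := by
  classical
  have hX : i + 2 * k + 1 ∈ I := hsub (Finset.mem_Icc.2 ⟨by omega, le_refl _⟩)
  have hXI := hI hX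
  rw [Finset.mem_Icc] at hXI
  have hn : i + 2 * k + 2 ≤ n := by omega
  have hwin : ∀ j : ℕ, i + 1 ≤ j → j ≤ i + 2 * k + 1 → j ∈ I :=
    fun j h1 h2 => hsub (Finset.mem_Icc.2 ⟨h1, h2⟩)
  set Jb := insert i (I.erase (i + 2 * k + 1)) with hJb
  have hU : I ∪ Jb = insert i I := by
    ext a
    simp only [hJb, Finset.mem_union, Finset.mem_insert, Finset.mem_erase]
    constructor
    · rintro (h | h | ⟨h1, h2⟩)
      · exact Or.inr h
      · exact Or.inl h
      · exact Or.inr h2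
    · rintro (h | h)
      · exact Or.inr (Or.inl h)
      · exact Or.inl h
  have hJins : insert (i + 2 * k + 1) Jb = insert i I := by
    ext a
    simp only [hJb, Finset.mem_insert, Finset.mem_erase]
    constructor
    · rintro (h | h | ⟨h1, h2⟩)
      · exact Or.inr (by rw [h]; exact hX)
      · exact Or.inl h
      · exact Or.inr h2
    · rintro (h | h)
      · exact Or.inr (Or.inl h)
      · by_cases hx : a = i + 2 * k + 1
        · exact Or.inl hx
        · exact Or.inr (Or.inr ⟨hx, h⟩)
  have hwin' : ∀ j : ℕ, i ≤ j → j ≤ i + 2 * k → j ∈ Jb := by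
    intro j h1 h2
    rcases eq_or_lt_of_le h1 with h3 | h3
    · exact h3 ▸ Finset.mem_insert_self _ _
    · exact Finset.mem_insert_of_mem (Finset.mem_erase.2 ⟨by omega, hwin j (by omega) (by omega)⟩)
  have hnot1 : i - 1 ∉ Jb := by
    rw [hJb, Finset.mem_insert]
    rintro (h | h)
    · omega
    · exact hleft2 (Finset.mem_erase.1 h).2
  have hnot2 : i + 2 * k + 1 ∉ Jb := by
    rw [hJb, Finset.mem_insert]
    rintro (h | h)
    · omega
    · exact (Finset.mem_erase.1 h).1 rfl
  have hnot3 : i + 2 * k + 2 ∉ Jb := by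
    rw [hJb, Finset.mem_insert]
    rintro (h | h)
    · omega
    · exact hright (Finset.mem_erase.1 h).2
  have e1 : gfA n (fun σ => inQuotA n I σ) = gfA n (fun σ => inQuotA n (insert i I) σ) := by
    rw [gf_split' I (insert i I)
        (fun σ h x y hxy hm => h x y hxy (Finset.mem_insert_of_mem hm)),
      vanish_left I i k hi hn hwin hleft hleft2 hright, add_zero]
  have e2 : gfA n (fun σ => inQuotA n Jb σ) = gfA n (fun σ => inQuotA n (insert i I) σ) := by
    rw [gf_split' Jb (insert (i + 2 * k + 1) Jb)
        (fun σ h x y hxy hm => h x y hxy (Finset.mem_insert_of_mem hm)),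
      vanish_right Jb i k hi hn hwin' hnot1 hnot2 hnot3, add_zero, hJins]
  refine ⟨?_, ?_⟩
  · rw [e1, hU]
  · rw [e1, ← e2]
end

section
/- For n even and I ⊆ [n-1] of the form I = [1,a_1-1] ∪ [a_1+1,a_2-1] ∪ ... ∪ [a_s+1,n-1] with a_1 < ... < a_s all even, every chessboard element of the quotient S_n^I is an even chessboard element: C_n^I = C_{n,+}^I. -/
open Finset Polynomial
open scoped Classical

/-- from the proof of Lemma 3.1. For `n` even and
`I = [1,a_1-1] ∪ [a_1+1,a_2-1] ∪ ⋯ ∪ [a_s+1,n-1]` with `a_1 < ⋯ < a_s` all even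
(equivalently `I = [1,n-1] \ A` for a set `A` of even numbers), every chessboard element of
the quotient `S_n^I` is an even chessboard element: `C_n^I = C_{n,+}^I`. -/
theorem statement19 (n : ℕ) (hn : n % 2 = 0) (hn' : 1 ≤ n)
    (I : Finset ℕ) (A : Finset ℕ) (hA : A ⊆ Finset.Icc 1 (n - 1))
    (hAeven : ∀ x ∈ A, x % 2 = 0) (hIA : I = Finset.Icc 1 (n - 1) \ A) :
    {σ : Equiv.Perm (Fin n) | (chessPlus n σ ∨ chessMinus n σ) ∧ inQuotA n I σ} =
      {σ : Equiv.Perm (Fin n) | chessPlus n σ ∧ inQuotA n I σ} := by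
  ext σ
  simp only [Set.mem_setOf_eq, and_congr_left_iff]
  intro hQ
  constructor
  · rintro (hP | hM)
    · exact hP
    · exfalso
      -- let i be the preimage of n-1
      have hnlt : n - 1 < n := by omega
      set m : Fin n := ⟨n - 1, hnlt⟩ with hm
      set i : Fin n := σ.symm m with hi
      have hσi : σ i = m := σ.apply_symm_apply m
      have h1 := hM i
      have hival : ((i : ℕ) + (n - 1)) % 2 = 1 := by simpa [hσi, hm] using h1
      have hieven : (i : ℕ) % 2 = 0 := by omega
      have hile : (i : ℕ) + 1 ≤ n - 1 := by
        have := i.isLt; omega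
      have hjlt : (i : ℕ) + 1 < n := by omega
      set j : Fin n := ⟨(i : ℕ) + 1, hjlt⟩ with hj
      have hmemI : (i : ℕ) + 1 ∈ I := by
        rw [hIA, Finset.mem_sdiff]
        refine ⟨Finset.mem_Icc.2 ⟨by omega, hile⟩, fun hcon => ?_⟩
        have := hAeven _ hcon
        omega
      have hlt := hQ i j rfl hmemI
      have : ((σ j : ℕ)) < n := (σ j).isLt
      have : ((σ i : ℕ)) < (σ j : ℕ) := hlt
      rw [hσi] at this
      simp only [hm] at this
      omega
  · exact fun h => Or.inl h
end
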